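/- arXiv:2409.03070 — 4 statements merged into one kernel-verified Lean document; each statement's English description precedes it below -/
import Mathlib

section
/- If G : X × X → [0,∞] is a product-measurable nonnegative kernel on a measurable space X, and for a measurable set E we define W(E) = inf over probability measures μ supported on E of ∬ G(x,y) dμ(x)dμ(y) (with W(E) = ∞ if E supports no probability measure), then for any countable family of measurable sets E₁, E₂, … we have 1/W(⋃ᵢ Eᵢ) ≤ Σᵢ 1/W(Eᵢ). -/
open MeasureTheory ENNReal

/-- The energy `W(E)` of a measurable set `E` with respect to a nonnegative kernel `G`:
the infimum over probability measures concentrated on `E` of the double integral of `G`.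
If `E` carries no probability measure the infimum is `∞`. -/
noncomputable def kernelEnergy {X : Type*} [MeasurableSpace X] (G : X → X → ℝ≥0∞)
    (E : Set X) : ℝ≥0∞ :=
  ⨅ (μ : Measure X) (_ : IsProbabilityMeasure μ) (_ : μ Eᶜ = 0),
    ∫⁻ x in E, ∫⁻ y in E, G x y ∂μ ∂μ

/-- Cauchy–Schwarz for `tsum` over `ℕ` in `ℝ≥0∞`. -/
theorem tsum_cauchy_schwarz (f g : ℕ → ℝ≥0∞) :
    ∑' i, f i * g i ≤ (∑' i, f i ^ (2 : ℝ)) ^ ((1 : ℝ)/2) * (∑' i, g i ^ (2 : ℝ)) ^ ((1 : ℝ)/2) := by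
  have hpq : Real.HolderConjugate 2 2 := Real.holderConjugate_iff.mpr ⟨by norm_num, by norm_num⟩
  have h := ENNReal.lintegral_mul_le_Lp_mul_Lq (Measure.count : Measure ℕ) hpq
    (f := f) (g := g) measurable_from_top.aemeasurable measurable_from_top.aemeasurable
  simpa [lintegral_count, Pi.mul_apply] using h

/-- Subadditivity of the reciprocal energy: `1/W(⋃ᵢ Eᵢ) ≤ Σᵢ 1/W(Eᵢ)`
(with the convention `1/∞ = 0`). -/
theorem reciprocal_energy_subadditive {X : Type*} [MeasurableSpace X]
    (G : X → X → ℝ≥0∞) (hG : Measurable (Function.uncurry G))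
    (E : ℕ → Set X) (hE : ∀ i, MeasurableSet (E i)) :
    (kernelEnergy G (⋃ i, E i))⁻¹ ≤ ∑' i, (kernelEnergy G (E i))⁻¹ := by
  classical
  set U := ⋃ i, E i with hUdef
  set S := ∑' i, (kernelEnergy G (E i))⁻¹ with hSdef
  by_cases hS : S = ∞
  · rw [hS]; exact le_top
  rw [kernelEnergy, ENNReal.inv_iInf]
  refine iSup_le fun μ => ?_
  rw [ENNReal.inv_iInf]
  refine iSup_le fun hμ => ?_
  rw [ENNReal.inv_iInf]
  refine iSup_le fun hμc => ?_
  set I := ∫⁻ x in U, ∫⁻ y in U, G x y ∂μ ∂μ with hIdef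
  show I⁻¹ ≤ S
  by_cases hItop : I = ∞
  · simp [hItop]
  -- disjointification
  set D := disjointed E with hDdef
  have hDm : ∀ i, MeasurableSet (D i) := MeasurableSet.disjointed hE
  have hDd : Pairwise (Function.onFun Disjoint D) := disjoint_disjointed E
  have hDU : ⋃ i, D i = U := iUnion_disjointed
  have hDsub : ∀ i, D i ⊆ E i := disjointed_subset E
  have hDsubU : ∀ i, D i ⊆ U := fun i => (hDsub i).trans (Set.subset_iUnion E i)
  set a : ℕ → ℝ≥0∞ := fun i => μ (D i) with hadef
  have hUm : MeasurableSet U := MeasurableSet.iUnion hE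
  have hμU : μ U = 1 := by
    have h1 : μ U + μ Uᶜ = μ Set.univ := measure_add_measure_compl hUm
    rwa [measure_univ, hμc, add_zero] at h1
  have ha1 : ∑' i, a i = 1 := by
    rw [← measure_iUnion hDd hDm, hDU, hμU]
  set Ii : ℕ → ℝ≥0∞ := fun i => ∫⁻ x in D i, ∫⁻ y in D i, G x y ∂μ ∂μ with hIidef
  -- sum of pieces bounded by total energy
  have hIsum : ∑' i, Ii i ≤ I := by
    have hstep : ∀ i, Ii i ≤ ∫⁻ x in D i, ∫⁻ y in U, G x y ∂μ ∂μ := fun i =>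
      lintegral_mono fun x => lintegral_mono_set (hDsubU i)
    calc ∑' i, Ii i ≤ ∑' i, ∫⁻ x in D i, ∫⁻ y in U, G x y ∂μ ∂μ :=
          ENNReal.tsum_le_tsum hstep
      _ = ∫⁻ x in ⋃ i, D i, ∫⁻ y in U, G x y ∂μ ∂μ :=
          (lintegral_iUnion hDm hDd _).symm
      _ = I := by rw [hDU]
  have hIi_ne_top : ∀ i, Ii i ≠ ∞ := fun i =>
    ne_top_of_le_ne_top hItop (le_trans (ENNReal.le_tsum i) hIsum)
  -- key pointwise bound
  have hkey : ∀ i, a i ≤ Ii i ^ ((1:ℝ)/2) * ((kernelEnergy G (E i))⁻¹) ^ ((1:ℝ)/2) := by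
    intro i
    by_cases hai : a i = 0
    · rw [hai]; exact zero_le
    have hai_top : a i ≠ ∞ := measure_ne_top μ (D i)
    have hinv_top : (a i)⁻¹ ≠ ∞ := ENNReal.inv_ne_top.mpr hai
    -- the normalized restricted measure
    set ν : Measure X := (a i)⁻¹ • μ.restrict (D i) with hνdef
    have hνprob : IsProbabilityMeasure ν := by
      constructor
      rw [hνdef, Measure.smul_apply, Measure.restrict_apply_univ, smul_eq_mul]
      exact ENNReal.inv_mul_cancel hai hai_top
    have hνc : ν (E i)ᶜ = 0 := by
      rw [hνdef, Measure.smul_apply, Measure.restrict_apply (hE i).compl, smul_eq_mul]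
      have hempty : (E i)ᶜ ∩ D i = ∅ := by
        rw [Set.eq_empty_iff_forall_notMem]
        rintro x ⟨hx1, hx2⟩
        exact hx1 (hDsub i hx2)
      rw [hempty, measure_empty, mul_zero]
    have hrestr : ν.restrict (E i) = (a i)⁻¹ • μ.restrict (D i) := by
      rw [hνdef, Measure.restrict_smul, Measure.restrict_restrict (hE i),
        Set.inter_eq_self_of_subset_right (hDsub i)]
    have hWle : kernelEnergy G (E i) ≤ (a i)⁻¹ * ((a i)⁻¹ * Ii i) := by
      have h1 : kernelEnergy G (E i) ≤ ∫⁻ x in E i, ∫⁻ y in E i, G x y ∂ν ∂ν :=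
        iInf_le_of_le ν (iInf_le_of_le hνprob (iInf_le _ hνc))
      refine h1.trans_eq ?_
      calc ∫⁻ x in E i, ∫⁻ y in E i, G x y ∂ν ∂ν
          = ∫⁻ x in E i, (a i)⁻¹ * ∫⁻ y in D i, G x y ∂μ ∂ν := by
            refine lintegral_congr fun x => ?_
            rw [hrestr, lintegral_smul_measure, smul_eq_mul]
        _ = (a i)⁻¹ * ∫⁻ x in D i, (a i)⁻¹ * ∫⁻ y in D i, G x y ∂μ ∂μ := by
            rw [hrestr, lintegral_smul_measure, smul_eq_mul]
        _ = (a i)⁻¹ * ((a i)⁻¹ * Ii i) := by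
            rw [lintegral_const_mul' _ _ hinv_top]
    set W := kernelEnergy G (E i) with hWdef
    have hWtop : W ≠ ∞ :=
      ne_top_of_le_ne_top
        (ENNReal.mul_ne_top hinv_top (ENNReal.mul_ne_top hinv_top (hIi_ne_top i))) hWle
    have hW0 : W ≠ 0 := by
      intro h0
      apply hS
      refine top_le_iff.mp ?_
      have : (kernelEnergy G (E i))⁻¹ = ∞ := by rw [← hWdef, h0, ENNReal.inv_zero]
      calc (∞ : ℝ≥0∞) = (kernelEnergy G (E i))⁻¹ := this.symm
        _ ≤ S := ENNReal.le_tsum i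
    have h2 : a i ^ 2 * W ≤ Ii i := by
      calc a i ^ 2 * W ≤ a i ^ 2 * ((a i)⁻¹ * ((a i)⁻¹ * Ii i)) := mul_le_mul_right hWle _
        _ = (a i * (a i)⁻¹) * ((a i * (a i)⁻¹) * Ii i) := by ring
        _ = Ii i := by rw [ENNReal.mul_inv_cancel hai hai_top, one_mul, one_mul]
    have h3 : a i ^ 2 ≤ Ii i * W⁻¹ := by
      calc a i ^ 2 = a i ^ 2 * W * W⁻¹ := by
            rw [mul_assoc, ENNReal.mul_inv_cancel hW0 hWtop, mul_one]
        _ ≤ Ii i * W⁻¹ := mul_le_mul_left h2 _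
    have h5 : ((a i ^ 2 : ℝ≥0∞)) ^ ((1:ℝ)/2) = a i := by
      rw [← ENNReal.rpow_natCast (a i) 2, ← ENNReal.rpow_mul]
      norm_num
    calc a i = ((a i ^ 2 : ℝ≥0∞)) ^ ((1:ℝ)/2) := h5.symm
      _ ≤ (Ii i * W⁻¹) ^ ((1:ℝ)/2) := ENNReal.rpow_le_rpow h3 (by norm_num)
      _ = Ii i ^ ((1:ℝ)/2) * (W⁻¹) ^ ((1:ℝ)/2) :=
          ENNReal.mul_rpow_of_ne_top (hIi_ne_top i) (ENNReal.inv_ne_top.mpr hW0) _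
  -- Cauchy–Schwarz
  have hsq : ∀ x : ℝ≥0∞, (x ^ ((1:ℝ)/2)) ^ (2:ℝ) = x := fun x => by
    rw [← ENNReal.rpow_mul]; norm_num
  have hCS : ∑' i, Ii i ^ ((1:ℝ)/2) * ((kernelEnergy G (E i))⁻¹) ^ ((1:ℝ)/2)
      ≤ (∑' i, Ii i) ^ ((1:ℝ)/2) * S ^ ((1:ℝ)/2) := by
    have h := tsum_cauchy_schwarz (fun i => Ii i ^ ((1:ℝ)/2))
      (fun i => ((kernelEnergy G (E i))⁻¹) ^ ((1:ℝ)/2))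
    simpa only [hsq, hSdef] using h
  have h1le : (1 : ℝ≥0∞) ≤ I ^ ((1:ℝ)/2) * S ^ ((1:ℝ)/2) := by
    calc (1 : ℝ≥0∞) = ∑' i, a i := ha1.symm
      _ ≤ ∑' i, Ii i ^ ((1:ℝ)/2) * ((kernelEnergy G (E i))⁻¹) ^ ((1:ℝ)/2) :=
          ENNReal.tsum_le_tsum hkey
      _ ≤ (∑' i, Ii i) ^ ((1:ℝ)/2) * S ^ ((1:ℝ)/2) := hCS
      _ ≤ I ^ ((1:ℝ)/2) * S ^ ((1:ℝ)/2) :=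
          mul_le_mul_left (ENNReal.rpow_le_rpow hIsum (by norm_num)) _
  have hI0 : I ≠ 0 := by
    intro h0
    rw [h0, ENNReal.zero_rpow_of_pos (by norm_num), zero_mul] at h1le
    simp at h1le
  have hIS : (1 : ℝ≥0∞) ≤ I * S := by
    calc (1 : ℝ≥0∞) = 1 * 1 := (one_mul 1).symm
      _ ≤ (I ^ ((1:ℝ)/2) * S ^ ((1:ℝ)/2)) * (I ^ ((1:ℝ)/2) * S ^ ((1:ℝ)/2)) :=
          mul_le_mul' h1le h1le
      _ = (I ^ ((1:ℝ)/2) * I ^ ((1:ℝ)/2)) * (S ^ ((1:ℝ)/2) * S ^ ((1:ℝ)/2)) := by ring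
      _ = I * S := by
          rw [← ENNReal.rpow_add_of_nonneg _ _ (by norm_num) (by norm_num),
            ← ENNReal.rpow_add_of_nonneg _ _ (by norm_num) (by norm_num)]
          norm_num
  calc I⁻¹ = I⁻¹ * 1 := (mul_one _).symm
    _ ≤ I⁻¹ * (I * S) := mul_le_mul_right hIS _
    _ = (I⁻¹ * I) * S := (mul_assoc _ _ _).symm
    _ = S := by rw [ENNReal.inv_mul_cancel hI0 hItop, one_mul]
end

section
/- Let d > 0 and n ≥ 1, and let E ⊆ ℝ^n be compact and upper Ahlfors d-regular with constant C, i.e., ℋ^d(B^n(x,r) ∩ E) ≤ C r^d for all x ∈ E and 0 < r ≤ diam(E), and suppose ℋ^d(E) > 0. Then limsup_{p↗d} (d−p) V_p(E) ≤ (d / ℋ^d(E)²) · ∫_E σ̄_d(ℋ^d|_E, x) dℋ^d(x), where V_p(E) is the Riesz p-energy of E and σ̄_d(μ,x) = limsup_{p↗d} (d−p) ∫₀¹ μ(B^n(x,r)) r^{−p−1} dr is the second-order upper density. -/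
open MeasureTheory Metric Filter Topology ENNReal

noncomputable def rieszEnergy {n : ℕ} (p : ℝ)
    (μ : Measure (EuclideanSpace ℝ (Fin n))) : ℝ≥0∞ :=
  ∫⁻ x, ∫⁻ y, edist x y ^ (-p) ∂μ ∂μ

noncomputable def rieszV (n : ℕ) (p : ℝ)
    (E : Set (EuclideanSpace ℝ (Fin n))) : ℝ≥0∞ :=
  ⨅ (μ : Measure (EuclideanSpace ℝ (Fin n))) (_ : IsProbabilityMeasure μ)
    (_ : μ Eᶜ = 0), rieszEnergy p μ

/-- Second-order upper density at dimension `d` of a measure `μ` on `ℝ^n` at `x`: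
`limsup_{p↗d} (d−p) ∫₀¹ μ(B(x,r)) r^{−p−1} dr`. -/
noncomputable def upperSecondDensity (n : ℕ) (d : ℝ)
    (μ : Measure (EuclideanSpace ℝ (Fin n))) (x : EuclideanSpace ℝ (Fin n)) : ℝ≥0∞ :=
  limsup (fun p : ℝ => ENNReal.ofReal (d - p) *
    ∫⁻ r in Set.Ioc (0 : ℝ) 1, μ (ball x r) * ENNReal.ofReal (r ^ (-p - 1))) (𝓝[<] d)

lemma aux_lint_Ioi {p t : ℝ} (hp : 0 < p) (ht : 0 < t) :
    ∫⁻ s in Set.Ioi t, ENNReal.ofReal (p * s ^ (-p - 1)) = ENNReal.ofReal (t ^ (-p)) := by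
  have hlt : (-p - 1 : ℝ) < -1 := by linarith
  have hint : IntegrableOn (fun s : ℝ => p * s ^ (-p - 1)) (Set.Ioi t) :=
    (integrableOn_Ioi_rpow_of_lt hlt ht).const_mul p
  have hnn : 0 ≤ᵐ[volume.restrict (Set.Ioi t)] fun s : ℝ => p * s ^ (-p - 1) := by
    filter_upwards [ae_restrict_mem measurableSet_Ioi] with s hs
    exact mul_nonneg hp.le (Real.rpow_nonneg (le_of_lt (ht.trans hs)) _)
  rw [← ofReal_integral_eq_lintegral_ofReal hint hnn]
  congr 1
  rw [MeasureTheory.integral_const_mul, integral_Ioi_rpow_of_lt hlt ht]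
  have : (-p - 1 : ℝ) + 1 = -p := by ring
  rw [this]
  field_simp

lemma aux_lint_Ioc {a R : ℝ} (ha : -1 < a) (hR : 0 < R) :
    ∫⁻ r in Set.Ioc (0 : ℝ) R, ENNReal.ofReal (r ^ a) =
      ENNReal.ofReal (R ^ (a + 1) / (a + 1)) := by
  have hint : IntegrableOn (fun r : ℝ => r ^ a) (Set.Ioc 0 R) :=
    (intervalIntegral.intervalIntegrable_rpow' ha (a := 0) (b := R)).1
  have hnn : 0 ≤ᵐ[volume.restrict (Set.Ioc (0:ℝ) R)] fun r : ℝ => r ^ a := by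
    filter_upwards [ae_restrict_mem measurableSet_Ioc] with r hr
    exact Real.rpow_nonneg hr.1.le _
  rw [← ofReal_integral_eq_lintegral_ofReal hint hnn]
  congr 1
  rw [← intervalIntegral.integral_of_le hR.le, integral_rpow (Or.inl ha),
    Real.zero_rpow (by linarith)]
  ring

variable {n : ℕ} in
lemma aux_meas_ball (μ : Measure (EuclideanSpace ℝ (Fin n))) [SFinite μ] :
    Measurable fun q : EuclideanSpace ℝ (Fin n) × ℝ => μ (ball q.1 q.2) := by
  have hS : MeasurableSet {z : (EuclideanSpace ℝ (Fin n) × ℝ) × EuclideanSpace ℝ (Fin n) |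
      dist z.1.1 z.2 < z.1.2} := by
    apply (isOpen_lt (by fun_prop) (by fun_prop)).measurableSet
  have h : Measurable fun q : EuclideanSpace ℝ (Fin n) × ℝ =>
      ∫⁻ y, ({z : (EuclideanSpace ℝ (Fin n) × ℝ) × EuclideanSpace ℝ (Fin n) |
        dist z.1.1 z.2 < z.1.2}).indicator (fun _ => (1 : ℝ≥0∞)) (q, y) ∂μ :=
    Measurable.lintegral_prod_right' (measurable_const.indicator hS)
  have heq : ∀ q : EuclideanSpace ℝ (Fin n) × ℝ,
      μ (ball q.1 q.2) = ∫⁻ y, ({z : (EuclideanSpace ℝ (Fin n) × ℝ) × EuclideanSpace ℝ (Fin n) |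
        dist z.1.1 z.2 < z.1.2}).indicator (fun _ => (1 : ℝ≥0∞)) (q, y) ∂μ := by
    intro q
    have : (fun y => ({z : (EuclideanSpace ℝ (Fin n) × ℝ) × EuclideanSpace ℝ (Fin n) |
        dist z.1.1 z.2 < z.1.2}).indicator (fun _ => (1 : ℝ≥0∞)) (q, y))
        = (ball q.1 q.2).indicator (fun _ => (1 : ℝ≥0∞)) := by
      funext y
      simp [Set.indicator, Set.mem_setOf_eq, mem_ball, dist_comm]
    rw [this, lintegral_indicator_const measurableSet_ball, one_mul]
  simpa only [← heq] using h

variable {n : ℕ} in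
lemma aux_meas_J (μ : Measure (EuclideanSpace ℝ (Fin n))) [SFinite μ] (c : ℝ) :
    Measurable fun x : EuclideanSpace ℝ (Fin n) =>
      ∫⁻ r in Set.Ioc (0 : ℝ) 1, μ (ball x r) * ENNReal.ofReal (r ^ c) := by
  apply Measurable.lintegral_prod_right' (ν := volume.restrict (Set.Ioc (0:ℝ) 1))
    (f := fun q : EuclideanSpace ℝ (Fin n) × ℝ => μ (ball q.1 q.2) * ENNReal.ofReal (q.2 ^ c))
  exact (aux_meas_ball μ).mul
    (ENNReal.measurable_ofReal.comp ((by measurability : Measurable fun r : ℝ => r ^ c).comp measurable_snd))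

variable {n : ℕ} in
lemma aux_inner_bound (μ : Measure (EuclideanSpace ℝ (Fin n))) [IsFiniteMeasure μ]
    [NullSingletonClass μ] {p : ℝ} (hp : 0 < p) (x : EuclideanSpace ℝ (Fin n)) :
    ∫⁻ y, edist x y ^ (-p) ∂μ ≤
      ENNReal.ofReal p *
        (∫⁻ r in Set.Ioc (0 : ℝ) 1, μ (ball x r) * ENNReal.ofReal (r ^ (-p - 1))) +
      μ Set.univ := by
  set c : ℝ → ℝ≥0∞ := fun s => ENNReal.ofReal (p * s ^ (-p - 1)) with hc
  have step1 : ∫⁻ y, edist x y ^ (-p) ∂μ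
      = ∫⁻ y, (∫⁻ s in Set.Ioi (0:ℝ), (Set.Ioi (dist x y)).indicator c s) ∂μ := by
    apply lintegral_congr_ae
    have hx : ∀ᵐ y ∂μ, y ≠ x := by
      rw [ae_iff]
      simpa [not_not, Set.setOf_eq_eq_singleton] using measure_singleton (μ := μ) x
    filter_upwards [hx] with y hy
    have hd : 0 < dist x y := dist_pos.2 (Ne.symm hy)
    rw [lintegral_indicator measurableSet_Ioi, Measure.restrict_restrict measurableSet_Ioi,
      Set.inter_eq_left.2 (Set.Ioi_subset_Ioi hd.le), aux_lint_Ioi hp hd,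
      edist_dist, ENNReal.ofReal_rpow_of_pos hd]
  have step2 : ∫⁻ y, (∫⁻ s in Set.Ioi (0:ℝ), (Set.Ioi (dist x y)).indicator c s) ∂μ
      = ∫⁻ s in Set.Ioi (0:ℝ), ∫⁻ y, (Set.Ioi (dist x y)).indicator c s ∂μ := by
    apply lintegral_lintegral_swap
    have : (Function.uncurry fun (y : EuclideanSpace ℝ (Fin n)) (s : ℝ) =>
        (Set.Ioi (dist x y)).indicator c s)
        = ({w : EuclideanSpace ℝ (Fin n) × ℝ | dist x w.1 < w.2}).indicator
            (fun w => c w.2) := by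
      funext z
      simp [Function.uncurry, Set.indicator, Set.mem_setOf_eq, Set.mem_Ioi]
    rw [this]
    refine (Measurable.indicator ?_ ?_).aemeasurable
    · exact ENNReal.measurable_ofReal.comp
        ((by measurability : Measurable fun s : ℝ => p * s ^ (-p - 1)).comp measurable_snd)
    · exact (isOpen_lt (by fun_prop) (by fun_prop)).measurableSet
  have step3 : ∀ s : ℝ, ∫⁻ y, (Set.Ioi (dist x y)).indicator c s ∂μ = c s * μ (ball x s) := by
    intro s
    have : (fun y => (Set.Ioi (dist x y)).indicator c s)
        = (ball x s).indicator (fun _ => c s) := by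
      funext y
      simp [Set.indicator, Set.mem_Ioi, mem_ball, dist_comm]
    rw [this, lintegral_indicator_const measurableSet_ball]
  rw [step1, step2, lintegral_congr fun s => step3 s, ← Set.Ioc_union_Ioi_eq_Ioi
    (zero_le_one (α := ℝ)), lintegral_union measurableSet_Ioi Set.Ioc_disjoint_Ioi_same]
  have part1 : ∫⁻ s in Set.Ioc (0:ℝ) 1, c s * μ (ball x s)
      = ENNReal.ofReal p *
        ∫⁻ r in Set.Ioc (0 : ℝ) 1, μ (ball x r) * ENNReal.ofReal (r ^ (-p - 1)) := by
    rw [← lintegral_const_mul' _ _ ENNReal.ofReal_ne_top]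
    apply lintegral_congr
    intro s
    rw [hc]
    simp only [ENNReal.ofReal_mul hp.le]
    ring
  have part2 : ∫⁻ s in Set.Ioi (1:ℝ), c s * μ (ball x s) ≤ μ Set.univ := by
    calc ∫⁻ s in Set.Ioi (1:ℝ), c s * μ (ball x s)
        ≤ ∫⁻ s in Set.Ioi (1:ℝ), c s * μ Set.univ :=
          lintegral_mono fun s => mul_le_mul_right (measure_mono (Set.subset_univ _)) _
      _ = (∫⁻ s in Set.Ioi (1:ℝ), c s) * μ Set.univ :=
          lintegral_mul_const' _ _ (measure_ne_top μ _)
      _ = μ Set.univ := by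
          rw [hc, aux_lint_Ioi hp one_pos, Real.one_rpow, ENNReal.ofReal_one, one_mul]
  rw [part1]
  exact add_le_add le_rfl part2

variable {n : ℕ} in
lemma aux_dom {d C : ℝ} (hC : 0 < C) {E : Set (EuclideanSpace ℝ (Fin n))}
    (hAhlfors : ∀ x ∈ E, ∀ r : ℝ, 0 < r → r ≤ diam E →
      μH[d] (ball x r ∩ E) ≤ ENNReal.ofReal (C * r ^ d))
    (hEdiam : 0 < diam E) {x : EuclideanSpace ℝ (Fin n)} (hx : x ∈ E)
    {p : ℝ} (hp0 : 0 < p) (hpd : p < d) :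
    ENNReal.ofReal (d - p) * ∫⁻ r in Set.Ioc (0:ℝ) 1,
        (μH[d].restrict E) (ball x r) * ENNReal.ofReal (r ^ (-p - 1))
      ≤ ENNReal.ofReal C +
        ENNReal.ofReal d * (μH[d] E * ENNReal.ofReal ((min 1 (diam E)) ^ (-d - 1))) := by
  set R₀ : ℝ := min 1 (diam E) with hR₀def
  have hR0 : 0 < R₀ := lt_min one_pos hEdiam
  have hR1 : R₀ ≤ 1 := min_le_left _ _
  have hsplit : Set.Ioc (0:ℝ) 1 = Set.Ioc 0 R₀ ∪ Set.Ioc R₀ 1 :=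
    (Set.Ioc_union_Ioc_eq_Ioc hR0.le hR1).symm
  rw [hsplit, lintegral_union measurableSet_Ioc (Set.Ioc_disjoint_Ioc_of_le le_rfl), mul_add]
  have hballE : ∀ r : ℝ, (μH[d].restrict E) (ball x r) = μH[d] (ball x r ∩ E) := fun r =>
    Measure.restrict_apply measurableSet_ball
  have termA : ENNReal.ofReal (d - p) * ∫⁻ r in Set.Ioc (0:ℝ) R₀,
      (μH[d].restrict E) (ball x r) * ENNReal.ofReal (r ^ (-p - 1)) ≤ ENNReal.ofReal C := by
    have hA : ∫⁻ r in Set.Ioc (0:ℝ) R₀,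
        (μH[d].restrict E) (ball x r) * ENNReal.ofReal (r ^ (-p - 1))
        ≤ ENNReal.ofReal C * ∫⁻ r in Set.Ioc (0:ℝ) R₀, ENNReal.ofReal (r ^ (d - p - 1)) := by
      rw [← lintegral_const_mul' _ _ ENNReal.ofReal_ne_top]
      apply lintegral_mono_ae
      filter_upwards [ae_restrict_mem measurableSet_Ioc] with r hr
      have h1 : (μH[d].restrict E) (ball x r) ≤ ENNReal.ofReal (C * r ^ d) := by
        rw [hballE]
        exact hAhlfors x hx r hr.1 (hr.2.trans (min_le_right _ _))
      calc (μH[d].restrict E) (ball x r) * ENNReal.ofReal (r ^ (-p - 1))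
          ≤ ENNReal.ofReal (C * r ^ d) * ENNReal.ofReal (r ^ (-p - 1)) :=
            mul_le_mul_left h1 _
        _ = ENNReal.ofReal C * ENNReal.ofReal (r ^ (d - p - 1)) := by
            rw [ENNReal.ofReal_mul hC.le, mul_assoc, ← ENNReal.ofReal_mul
              (Real.rpow_nonneg hr.1.le _), ← Real.rpow_add hr.1,
              show d + (-p - 1) = d - p - 1 by ring]
    have hval : ∫⁻ r in Set.Ioc (0:ℝ) R₀, ENNReal.ofReal (r ^ (d - p - 1))
        = ENNReal.ofReal (R₀ ^ (d - p) / (d - p)) := by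
      rw [aux_lint_Ioc (by linarith) hR0]
      norm_num
    calc ENNReal.ofReal (d - p) * ∫⁻ r in Set.Ioc (0:ℝ) R₀,
          (μH[d].restrict E) (ball x r) * ENNReal.ofReal (r ^ (-p - 1))
        ≤ ENNReal.ofReal (d - p) * (ENNReal.ofReal C *
            ENNReal.ofReal (R₀ ^ (d - p) / (d - p))) := by
          rw [← hval]; exact mul_le_mul_right hA _
      _ = ENNReal.ofReal C * ENNReal.ofReal ((d - p) * (R₀ ^ (d - p) / (d - p))) := by
          rw [ENNReal.ofReal_mul (by linarith : (0:ℝ) ≤ d - p)]; ring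
      _ ≤ ENNReal.ofReal C * 1 := by
          apply mul_le_mul_right
          apply ENNReal.ofReal_le_one.2
          have hdp : d - p ≠ 0 := by linarith
          rw [mul_comm, div_mul_cancel₀ _ hdp]
          exact Real.rpow_le_one hR0.le hR1 (by linarith)
      _ = ENNReal.ofReal C := mul_one _
  have termB : ENNReal.ofReal (d - p) * ∫⁻ r in Set.Ioc R₀ 1,
      (μH[d].restrict E) (ball x r) * ENNReal.ofReal (r ^ (-p - 1))
      ≤ ENNReal.ofReal d * (μH[d] E * ENNReal.ofReal (R₀ ^ (-d - 1))) := by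
    have hB : ∫⁻ r in Set.Ioc R₀ 1,
        (μH[d].restrict E) (ball x r) * ENNReal.ofReal (r ^ (-p - 1))
        ≤ μH[d] E * ENNReal.ofReal (R₀ ^ (-d - 1)) := by
      have hbd : ∀ᵐ r ∂(volume.restrict (Set.Ioc R₀ 1)),
          (μH[d].restrict E) (ball x r) * ENNReal.ofReal (r ^ (-p - 1))
          ≤ μH[d] E * ENNReal.ofReal (R₀ ^ (-d - 1)) := by
        filter_upwards [ae_restrict_mem measurableSet_Ioc] with r hr
        apply mul_le_mul
        · rw [hballE]; exact measure_mono Set.inter_subset_right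
        · apply ENNReal.ofReal_le_ofReal
          calc r ^ (-p - 1) ≤ R₀ ^ (-p - 1) :=
              Real.rpow_le_rpow_of_nonpos hR0 hr.1.le (by linarith)
            _ ≤ R₀ ^ (-d - 1) :=
              Real.rpow_le_rpow_of_exponent_ge hR0 hR1 (by linarith)
        · exact zero_le
        · exact zero_le
      calc ∫⁻ r in Set.Ioc R₀ 1,
            (μH[d].restrict E) (ball x r) * ENNReal.ofReal (r ^ (-p - 1))
          ≤ ∫⁻ _ in Set.Ioc R₀ 1, μH[d] E * ENNReal.ofReal (R₀ ^ (-d - 1)) :=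
            lintegral_mono_ae hbd
        _ = (μH[d] E * ENNReal.ofReal (R₀ ^ (-d - 1))) * volume (Set.Ioc R₀ 1) :=
            setLIntegral_const _ _
        _ ≤ (μH[d] E * ENNReal.ofReal (R₀ ^ (-d - 1))) * 1 := by
            apply mul_le_mul_right
            rw [Real.volume_Ioc]
            exact ENNReal.ofReal_le_one.2 (by linarith)
        _ = μH[d] E * ENNReal.ofReal (R₀ ^ (-d - 1)) := mul_one _
    exact mul_le_mul (ENNReal.ofReal_le_ofReal (by linarith)) hB zero_le zero_le
  exact add_le_add termA termB

lemma aux_limsup_add {α : Type*} {f : Filter α} (u v : α → ℝ≥0∞) :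
    limsup (fun x => u x + v x) f ≤ limsup u f + limsup v f := by
  refine ENNReal.le_of_forall_pos_le_add fun ε hε hlt => ?_
  have hu : limsup u f ≠ ⊤ := fun h => by simp [h] at hlt
  have hv : limsup v f ≠ ⊤ := fun h => by simp [h] at hlt
  have hε2 : ((ε : ℝ≥0∞) / 2) ≠ 0 := by
    simp [ENNReal.div_eq_zero_iff, hε.ne']
  have e1 := eventually_lt_of_limsup_lt (ENNReal.lt_add_right hu hε2)
  have e2 := eventually_lt_of_limsup_lt (ENNReal.lt_add_right hv hε2)
  apply limsup_le_of_le (by isBoundedDefault)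
  filter_upwards [e1, e2] with x h1 h2
  calc u x + v x ≤ (limsup u f + ε / 2) + (limsup v f + ε / 2) :=
      add_le_add h1.le h2.le
    _ = limsup u f + limsup v f + (ε / 2 + ε / 2) := by ring
    _ = limsup u f + limsup v f + ε := by rw [ENNReal.add_halves]

lemma aux_revFatou {X : Type*} [MeasurableSpace X] (μ : Measure X) [IsFiniteMeasure μ]
    (d : ℝ) (h : ℝ → X → ℝ≥0∞) (hmeas : ∀ p, Measurable (h p)) (K : ℝ≥0∞) (hK : K ≠ ⊤)
    (hdom : ∀ᶠ p in 𝓝[<] d, ∀ᵐ x ∂μ, h p x ≤ K) :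
    limsup (fun p => ∫⁻ x, h p x ∂μ) (𝓝[<] d) ≤
      ∫⁻ x, limsup (fun p => h p x) (𝓝[<] d) ∂μ := by
  apply le_of_forall_lt_imp_le_of_dense
  intro a ha
  obtain ⟨s, hs⟩ := (𝓝[<] (d:ℝ)).exists_antitone_basis
  have hfreq : ∃ᶠ p in 𝓝[<] d, a < ∫⁻ x, h p x ∂μ ∧ ∀ᵐ x ∂μ, h p x ≤ K :=
    (frequently_lt_of_lt_limsup (by isBoundedDefault) ha).and_eventually hdom
  have hex : ∀ k : ℕ, ∃ p, p ∈ s k ∧ ((a < ∫⁻ x, h p x ∂μ) ∧ ∀ᵐ x ∂μ, h p x ≤ K) := by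
    intro k
    have hsk : ∀ᶠ p in 𝓝[<] d, p ∈ s k := hs.toHasBasis.mem_of_mem trivial
    obtain ⟨p, hp1, hp2⟩ := (hfreq.and_eventually hsk).exists
    exact ⟨p, hp2, hp1⟩
  choose pseq hps using hex
  have htt : Tendsto pseq atTop (𝓝[<] d) := hs.tendsto fun k => (hps k).1
  have hfatou : limsup (fun k => ∫⁻ x, h (pseq k) x ∂μ) atTop
      ≤ ∫⁻ x, limsup (fun k => h (pseq k) x) atTop ∂μ := by
    apply limsup_lintegral_le (fun _ => K) (fun k => hmeas _) (fun k => (hps k).2.2)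
    rw [lintegral_const]
    exact ENNReal.mul_ne_top hK (measure_ne_top μ _)
  have hptwise : ∀ x, limsup (fun k => h (pseq k) x) atTop
      ≤ limsup (fun p => h p x) (𝓝[<] d) := by
    intro x
    have hmap : limsup (fun k => h (pseq k) x) atTop
        = limsup (fun p => h p x) (Filter.map pseq atTop) := by
      rw [Filter.limsup, Filter.limsup, Filter.map_map]
      rfl
    rw [hmap]
    exact limsup_le_limsup_of_le htt
  calc a ≤ liminf (fun k => ∫⁻ x, h (pseq k) x ∂μ) atTop :=
      le_liminf_of_le (by isBoundedDefault)
        (Eventually.of_forall fun k => (hps k).2.1.le)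
    _ ≤ limsup (fun k => ∫⁻ x, h (pseq k) x ∂μ) atTop := liminf_le_limsup
    _ ≤ ∫⁻ x, limsup (fun k => h (pseq k) x) atTop ∂μ := hfatou
    _ ≤ ∫⁻ x, limsup (fun p => h p x) (𝓝[<] d) ∂μ := lintegral_mono hptwise

lemma aux_V_bound {n : ℕ} (E : Set (EuclideanSpace ℝ (Fin n)))
    (μ : Measure (EuclideanSpace ℝ (Fin n))) [IsFiniteMeasure μ] [NullSingletonClass μ]
    (hnullc : μ Eᶜ = 0) (hm0 : μ Set.univ ≠ 0) (hm1 : μ Set.univ ≠ ⊤) {p : ℝ} (hp : 0 < p) :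
    rieszV n p E ≤ (μ Set.univ)⁻¹ ^ 2 *
      (ENNReal.ofReal p * (∫⁻ x, (∫⁻ r in Set.Ioc (0 : ℝ) 1,
          μ (ball x r) * ENNReal.ofReal (r ^ (-p - 1))) ∂μ) +
        μ Set.univ * μ Set.univ) := by
  set m : ℝ≥0∞ := μ Set.univ with hm
  set ν : Measure (EuclideanSpace ℝ (Fin n)) := m⁻¹ • μ with hν
  have hprob : IsProbabilityMeasure ν := ⟨by
    rw [hν, Measure.smul_apply, smul_eq_mul, ENNReal.inv_mul_cancel hm0 hm1]⟩
  have hnull : ν Eᶜ = 0 := by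
    rw [hν, Measure.smul_apply, hnullc, smul_eq_mul, mul_zero]
  have hVle : rieszV n p E ≤ rieszEnergy p ν :=
    (iInf_le _ ν).trans ((iInf_le _ hprob).trans (iInf_le _ hnull))
  refine hVle.trans ?_
  have henergy : rieszEnergy p ν = m⁻¹ ^ 2 * ∫⁻ x, (∫⁻ y, edist x y ^ (-p) ∂μ) ∂μ := by
    rw [rieszEnergy, hν, lintegral_smul_measure]
    have h2 : ∀ x : EuclideanSpace ℝ (Fin n),
        ∫⁻ y, edist x y ^ (-p) ∂(m⁻¹ • μ) = m⁻¹ * ∫⁻ y, edist x y ^ (-p) ∂μ := fun x =>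
      lintegral_smul_measure _ _
    rw [lintegral_congr h2, lintegral_const_mul' _ _ (ENNReal.inv_ne_top.2 hm0)]
    ring
  rw [henergy]
  apply mul_le_mul_right
  have hinner : ∀ x : EuclideanSpace ℝ (Fin n), ∫⁻ y, edist x y ^ (-p) ∂μ
      ≤ ENNReal.ofReal p * (∫⁻ r in Set.Ioc (0 : ℝ) 1,
          μ (ball x r) * ENNReal.ofReal (r ^ (-p - 1))) + m :=
    fun x => aux_inner_bound μ hp x
  calc ∫⁻ x, (∫⁻ y, edist x y ^ (-p) ∂μ) ∂μ
      ≤ ∫⁻ x, (ENNReal.ofReal p * (∫⁻ r in Set.Ioc (0 : ℝ) 1,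
          μ (ball x r) * ENNReal.ofReal (r ^ (-p - 1))) + m) ∂μ := lintegral_mono hinner
    _ = ENNReal.ofReal p * (∫⁻ x, (∫⁻ r in Set.Ioc (0 : ℝ) 1,
          μ (ball x r) * ENNReal.ofReal (r ^ (-p - 1))) ∂μ) + m * m := by
        rw [lintegral_add_left ((aux_meas_J μ _).const_mul _), lintegral_const,
          lintegral_const_mul' _ _ ENNReal.ofReal_ne_top]

set_option maxHeartbeats 1000000 in
/-- For a compact, upper Ahlfors `d`-regular set of positive `ℋ^d`-measure,
`limsup_{p↗d} (d−p) V_p(E) ≤ (d/ℋ^d(E)²) ∫_E σ̄_d(ℋ^d|_E, x) dℋ^d(x)`. -/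
theorem energy_limsup_le_upperSecondDensity (d : ℝ) (hd : 0 < d) (n : ℕ) (hn : 1 ≤ n)
    (E : Set (EuclideanSpace ℝ (Fin n))) (hE : IsCompact E)
    (C : ℝ) (hC : 0 < C)
    (hAhlfors : ∀ x ∈ E, ∀ r : ℝ, 0 < r → r ≤ diam E →
      μH[d] (ball x r ∩ E) ≤ ENNReal.ofReal (C * r ^ d))
    (hpos : 0 < μH[d] E) :
    limsup (fun p : ℝ => ENNReal.ofReal (d - p) * rieszV n p E) (𝓝[<] d) ≤
      (ENNReal.ofReal d / (μH[d] E) ^ 2) *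
        ∫⁻ x in E, upperSecondDensity n d (μH[d].restrict E) x ∂(μH[d]) := by
  haveI := MeasureTheory.Measure.noAtoms_hausdorff (EuclideanSpace ℝ (Fin n)) hd
  have hmeasE : MeasurableSet E := hE.isClosed.measurableSet
  have hEdiam : 0 < diam E := by
    rcases Set.eq_empty_or_nonempty E with h | h
    · rw [h] at hpos; simp at hpos
    by_cases hnt : E.Nontrivial
    · obtain ⟨a, ha, b, hb, hab⟩ := hnt
      exact lt_of_lt_of_le (dist_pos.2 hab) (dist_le_diam_of_mem hE.isBounded ha hb)
    · rw [Set.not_nontrivial_iff] at hnt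
      obtain ⟨x, hxE⟩ := h
      have hsub : E ⊆ {x} := fun y hy => hnt hy hxE
      have hle := measure_mono (μ := μH[d]) hsub
      rw [measure_singleton] at hle
      exact absurd (lt_of_lt_of_le hpos hle) (by simp)
  have hfin : μH[d] E < ⊤ := by
    have hcover : E ⊆ ⋃ x : E, ball (x : EuclideanSpace ℝ (Fin n)) (diam E) := fun y hy =>
      Set.mem_iUnion.2 ⟨⟨y, hy⟩, mem_ball_self hEdiam⟩
    obtain ⟨t, ht⟩ := hE.elim_finite_subcover
      (fun x : E => ball (x : EuclideanSpace ℝ (Fin n)) (diam E))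
      (fun _ => isOpen_ball) hcover
    have hsub : E ⊆ ⋃ i ∈ t, (ball (i : EuclideanSpace ℝ (Fin n)) (diam E) ∩ E) := by
      intro y hy
      obtain ⟨i, hi, hyi⟩ := Set.mem_iUnion₂.1 (ht hy)
      exact Set.mem_iUnion₂.2 ⟨i, hi, hyi, hy⟩
    calc μH[d] E ≤ ∑ i ∈ t, μH[d] (ball (i : EuclideanSpace ℝ (Fin n)) (diam E) ∩ E) :=
        (measure_mono hsub).trans (measure_biUnion_finset_le _ _)
      _ ≤ ∑ _i ∈ t, ENNReal.ofReal (C * diam E ^ d) :=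
        Finset.sum_le_sum fun i _ => hAhlfors i i.2 (diam E) hEdiam le_rfl
      _ < ⊤ := ENNReal.sum_lt_top.2 fun i _ => ENNReal.ofReal_lt_top
  have hm0 : μH[d] E ≠ 0 := hpos.ne'
  have hmtop : μH[d] E ≠ ⊤ := hfin.ne
  have hμuniv : (μH[d].restrict E) Set.univ = μH[d] E := Measure.restrict_apply_univ E
  haveI : IsFiniteMeasure (μH[d].restrict E) := ⟨by rw [hμuniv]; exact hfin⟩
  haveI : NullSingletonClass (μH[d].restrict E) := ⟨fun x => by
    rw [Measure.restrict_apply (measurableSet_singleton x)]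
    exact measure_mono_null Set.inter_subset_left (measure_singleton x)⟩
  have hnullc : (μH[d].restrict E) Eᶜ = 0 := by
    rw [Measure.restrict_apply hmeasE.compl]
    simp [Set.compl_inter_self]
  have hJmeas : ∀ p : ℝ, Measurable fun x : EuclideanSpace ℝ (Fin n) =>
      ∫⁻ r in Set.Ioc (0:ℝ) 1, (μH[d].restrict E) (ball x r) * ENNReal.ofReal (r ^ (-p - 1)) :=
    fun p => aux_meas_J _ _
  have hev : ∀ᶠ p in 𝓝[<] d, ENNReal.ofReal (d - p) * rieszV n p E
      ≤ (ENNReal.ofReal d * ((μH[d] E)⁻¹) ^ 2) *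
          (∫⁻ x, ENNReal.ofReal (d - p) * (∫⁻ r in Set.Ioc (0:ℝ) 1,
            (μH[d].restrict E) (ball x r) * ENNReal.ofReal (r ^ (-p - 1)))
            ∂(μH[d].restrict E))
        + ENNReal.ofReal (d - p) := by
    filter_upwards [Ioo_mem_nhdsLT_of_mem (show d ∈ Set.Ioc 0 d from ⟨hd, le_rfl⟩)] with p hp
    have hp0 : 0 < p := hp.1
    have hpd : p < d := hp.2
    have hV := aux_V_bound E (μH[d].restrict E) hnullc (by rw [hμuniv]; exact hm0)
      (by rw [hμuniv]; exact hmtop) hp0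
    rw [hμuniv] at hV
    have hhint : ∫⁻ x, ENNReal.ofReal (d - p) * (∫⁻ r in Set.Ioc (0:ℝ) 1,
        (μH[d].restrict E) (ball x r) * ENNReal.ofReal (r ^ (-p - 1)))
        ∂(μH[d].restrict E)
        = ENNReal.ofReal (d - p) * ∫⁻ x, (∫⁻ r in Set.Ioc (0:ℝ) 1,
            (μH[d].restrict E) (ball x r) * ENNReal.ofReal (r ^ (-p - 1)))
            ∂(μH[d].restrict E) :=
      lintegral_const_mul' _ _ ENNReal.ofReal_ne_top
    rw [hhint]
    set Jint : ℝ≥0∞ := ∫⁻ x, (∫⁻ r in Set.Ioc (0:ℝ) 1,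
      (μH[d].restrict E) (ball x r) * ENNReal.ofReal (r ^ (-p - 1)))
      ∂(μH[d].restrict E) with hJint
    set m : ℝ≥0∞ := μH[d] E with hmdef
    calc ENNReal.ofReal (d - p) * rieszV n p E
        ≤ ENNReal.ofReal (d - p) * (m⁻¹ ^ 2 * (ENNReal.ofReal p * Jint + m * m)) :=
          mul_le_mul_right hV _
      _ = ENNReal.ofReal p * (m⁻¹ ^ 2 * (ENNReal.ofReal (d - p) * Jint))
            + ENNReal.ofReal (d - p) * ((m⁻¹ * m) * (m⁻¹ * m)) := by ring
      _ ≤ ENNReal.ofReal d * (m⁻¹ ^ 2 * (ENNReal.ofReal (d - p) * Jint))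
            + ENNReal.ofReal (d - p) * 1 := by
          refine add_le_add (mul_le_mul_left (ENNReal.ofReal_le_ofReal hpd.le) _)
            (mul_le_mul_right (le_of_eq ?_) _)
          rw [ENNReal.inv_mul_cancel hm0 hmtop, one_mul]
      _ = (ENNReal.ofReal d * (m⁻¹) ^ 2) * (ENNReal.ofReal (d - p) * Jint)
            + ENNReal.ofReal (d - p) := by
          rw [mul_one]; ring
  -- domination and reverse Fatou
  have hKtop : (ENNReal.ofReal C +
      ENNReal.ofReal d * (μH[d] E * ENNReal.ofReal ((min 1 (diam E)) ^ (-d - 1)))) ≠ ⊤ :=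
    ENNReal.add_ne_top.2 ⟨ENNReal.ofReal_ne_top,
      ENNReal.mul_ne_top ENNReal.ofReal_ne_top
        (ENNReal.mul_ne_top hmtop ENNReal.ofReal_ne_top)⟩
  have hdom : ∀ᶠ p in 𝓝[<] d, ∀ᵐ x ∂(μH[d].restrict E),
      (fun p (x : EuclideanSpace ℝ (Fin n)) => ENNReal.ofReal (d - p) *
        ∫⁻ r in Set.Ioc (0:ℝ) 1,
          (μH[d].restrict E) (ball x r) * ENNReal.ofReal (r ^ (-p - 1))) p x
      ≤ ENNReal.ofReal C +
        ENNReal.ofReal d * (μH[d] E * ENNReal.ofReal ((min 1 (diam E)) ^ (-d - 1))) := by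
    filter_upwards [Ioo_mem_nhdsLT_of_mem (show d ∈ Set.Ioc 0 d from ⟨hd, le_rfl⟩)] with p hp
    filter_upwards [ae_restrict_mem hmeasE] with x hxE
    exact aux_dom hC hAhlfors hEdiam hxE hp.1 hp.2
  have key := aux_revFatou (μH[d].restrict E) d
    (fun p x => ENNReal.ofReal (d - p) * ∫⁻ r in Set.Ioc (0:ℝ) 1,
      (μH[d].restrict E) (ball x r) * ENNReal.ofReal (r ^ (-p - 1)))
    (fun p => (hJmeas p).const_mul _) _ hKtop hdom
  have hTend0 : Tendsto (fun p : ℝ => ENNReal.ofReal (d - p)) (𝓝[<] d) (𝓝 0) := by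
    have h1 : Tendsto (fun p : ℝ => d - p) (𝓝[<] d) (𝓝 (d - d)) :=
      (tendsto_const_nhds.sub tendsto_id).mono_left nhdsWithin_le_nhds
    rw [sub_self] at h1
    simpa [Function.comp_def] using (ENNReal.continuous_ofReal.tendsto 0).comp h1
  have hcst_ne_top : (ENNReal.ofReal d * ((μH[d] E)⁻¹) ^ 2) ≠ ⊤ :=
    ENNReal.mul_ne_top ENNReal.ofReal_ne_top
      (pow_ne_top (ENNReal.inv_ne_top.2 hm0))
  have hσ : ∫⁻ x, limsup (fun p => ENNReal.ofReal (d - p) *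
        ∫⁻ r in Set.Ioc (0:ℝ) 1,
          (μH[d].restrict E) (ball x r) * ENNReal.ofReal (r ^ (-p - 1))) (𝓝[<] d)
        ∂(μH[d].restrict E)
      = ∫⁻ x in E, upperSecondDensity n d (μH[d].restrict E) x ∂(μH[d]) := rfl
  calc limsup (fun p : ℝ => ENNReal.ofReal (d - p) * rieszV n p E) (𝓝[<] d)
      ≤ limsup (fun p : ℝ => (ENNReal.ofReal d * ((μH[d] E)⁻¹) ^ 2) *
          (∫⁻ x, ENNReal.ofReal (d - p) * (∫⁻ r in Set.Ioc (0:ℝ) 1,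
            (μH[d].restrict E) (ball x r) * ENNReal.ofReal (r ^ (-p - 1)))
            ∂(μH[d].restrict E))
          + ENNReal.ofReal (d - p)) (𝓝[<] d) :=
        limsup_le_limsup hev
    _ ≤ limsup (fun p : ℝ => (ENNReal.ofReal d * ((μH[d] E)⁻¹) ^ 2) *
          (∫⁻ x, ENNReal.ofReal (d - p) * (∫⁻ r in Set.Ioc (0:ℝ) 1,
            (μH[d].restrict E) (ball x r) * ENNReal.ofReal (r ^ (-p - 1)))
            ∂(μH[d].restrict E))) (𝓝[<] d)
          + limsup (fun p : ℝ => ENNReal.ofReal (d - p)) (𝓝[<] d) :=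
        aux_limsup_add _ _
    _ = (ENNReal.ofReal d * ((μH[d] E)⁻¹) ^ 2) *
          limsup (fun p : ℝ => ∫⁻ x, ENNReal.ofReal (d - p) *
            (∫⁻ r in Set.Ioc (0:ℝ) 1,
              (μH[d].restrict E) (ball x r) * ENNReal.ofReal (r ^ (-p - 1)))
            ∂(μH[d].restrict E)) (𝓝[<] d) := by
        rw [hTend0.limsup_eq, add_zero, ENNReal.limsup_const_mul_of_ne_top hcst_ne_top]
    _ ≤ (ENNReal.ofReal d * ((μH[d] E)⁻¹) ^ 2) *
          ∫⁻ x in E, upperSecondDensity n d (μH[d].restrict E) x ∂(μH[d]) := by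
        rw [← hσ]
        exact mul_le_mul_right key _
    _ = (ENNReal.ofReal d / (μH[d] E) ^ 2) *
          ∫⁻ x in E, upperSecondDensity n d (μH[d].restrict E) x ∂(μH[d]) := by
        rw [div_eq_mul_inv, ENNReal.inv_pow]
end

section
/- Let d > 0, n ≥ 1, and let E ⊆ ℝ^n be compact, upper Ahlfors d-regular, with ℋ^d(E) > 0. Suppose the second-order density σ_d(ℋ^d|_E, x) = lim_{p↗d} (d−p) ∫₀¹ ℋ^d(B^n(x,r) ∩ E) r^{−p−1} dr exists and equals a constant σ_d(E) ∈ (0,∞) for ℋ^d-a.e. x ∈ E. Then liminf_{p↗d} Cap_p(E)^p / (d−p) ≥ ℋ^d(E) / (d · σ_d(E)), where Cap_p(E) = V_p(E)^{−1/p} is the Riesz p-capacity. -/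
open MeasureTheory Metric Filter Topology ENNReal

noncomputable def rieszCap (n : ℕ) (p : ℝ)
    (E : Set (EuclideanSpace ℝ (Fin n))) : ℝ≥0∞ :=
  (rieszV n p E) ^ (-1 / p)

section Aux

open Set

lemma auxLintIoi (p s : ℝ) (hp : 0 < p) (hs : 0 < s) :
    ∫⁻ r in Set.Ioi s, ENNReal.ofReal (r ^ (-p - 1)) = ENNReal.ofReal (s ^ (-p) / p) := by
  have ha : (-p - 1 : ℝ) < -1 := by linarith
  rw [← ofReal_integral_eq_lintegral_ofReal (integrableOn_Ioi_rpow_of_lt ha hs)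
      (by filter_upwards [self_mem_ae_restrict (measurableSet_Ioi : MeasurableSet (Ioi s))]
          with r hr
          exact Real.rpow_nonneg (le_of_lt (lt_trans hs hr)) _)]
  rw [integral_Ioi_rpow_of_lt ha hs]
  congr 1
  have h1 : (-p - 1 : ℝ) + 1 = -p := by ring
  rw [h1, div_eq_div_iff (by linarith) hp.ne']
  ring

lemma auxLintIoc (a : ℝ) (ha : -1 < a) :
    ∫⁻ r in Set.Ioc (0 : ℝ) 1, ENNReal.ofReal (r ^ a) = ENNReal.ofReal (1 / (a + 1)) := by
  have hInt : IntegrableOn (fun r : ℝ => r ^ a) (Set.Ioc 0 1) := by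
    have h := (intervalIntegral.intervalIntegrable_rpow' (a := 0) (b := 1) ha)
    rw [intervalIntegrable_iff] at h
    simpa [Set.uIoc_of_le (zero_le_one : (0:ℝ) ≤ 1)] using h
  rw [← ofReal_integral_eq_lintegral_ofReal hInt
      (by filter_upwards [self_mem_ae_restrict (measurableSet_Ioc : MeasurableSet (Ioc (0:ℝ) 1))]
          with r hr
          exact Real.rpow_nonneg hr.1.le _)]
  congr 1
  rw [← intervalIntegral.integral_of_le (zero_le_one : (0:ℝ) ≤ 1)]
  rw [integral_rpow (Or.inl ha)]
  rw [Real.one_rpow, Real.zero_rpow (by linarith : a + 1 ≠ 0)]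
  ring

lemma auxKernel (p s : ℝ) (hp : 0 < p) (hs : 0 < s) :
    ENNReal.ofReal s ^ (-p) =
      ENNReal.ofReal p * ∫⁻ r in Set.Ioi s, ENNReal.ofReal (r ^ (-p - 1)) := by
  rw [auxLintIoi p s hp hs, ← ENNReal.ofReal_mul hp.le,
    mul_div_cancel₀ _ hp.ne', ← ENNReal.ofReal_rpow_of_pos hs]

set_option synthInstance.maxHeartbeats 1000000 in
lemma auxMeasBall {X : Type*} [MeasurableSpace X] [PseudoMetricSpace X] [BorelSpace X]
    [SecondCountableTopology X]
    (ν : Measure X) [SFinite ν] :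
    Measurable fun q : X × ℝ => ν (ball q.1 q.2) := by
  have hs : MeasurableSet {z : (X × ℝ) × X | dist z.2 z.1.1 < z.1.2} :=
    (isOpen_lt (continuous_snd.dist continuous_fst.fst) continuous_fst.snd).measurableSet
  have h := measurable_measure_prodMk_left (ν := ν) hs
  convert h using 2 with q
  rfl

lemma auxRep {X : Type*} [MeasurableSpace X] [MetricSpace X] [BorelSpace X]
    [SecondCountableTopology X]
    (ν : Measure X) [IsFiniteMeasure ν] {p : ℝ} (hp : 0 < p) (x : X) (hx : ν {x} = 0) :
    ∫⁻ y, edist x y ^ (-p) ∂ν =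
      ENNReal.ofReal p * ∫⁻ r in Set.Ioi (0 : ℝ),
        ν (ball x r) * ENNReal.ofReal (r ^ (-p - 1)) := by
  set f : X → ℝ → ℝ≥0∞ :=
    fun y r => if dist y x < r then ENNReal.ofReal (r ^ (-p - 1)) else 0 with hf
  have hstep1 : ∀ᵐ y ∂ν, edist x y ^ (-p) =
      ENNReal.ofReal p * ∫⁻ r in Set.Ioi (0 : ℝ), f y r := by
    have hne : ∀ᵐ y ∂ν, y ≠ x := by
      rw [ae_iff]
      convert hx using 2
      ext y; simp
    filter_upwards [hne] with y hy
    have hdy : 0 < dist y x := dist_pos.2 hy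
    have h1 : ∫⁻ r in Set.Ioi (0 : ℝ), f y r
        = ∫⁻ r in Set.Ioi (dist y x), ENNReal.ofReal (r ^ (-p - 1)) := by
      have h2 : ∀ r : ℝ, f y r =
          (Set.Ioi (dist y x)).indicator (fun r => ENNReal.ofReal (r ^ (-p - 1))) r := by
        intro r; simp [hf, Set.indicator_apply, Set.mem_Ioi]
      simp_rw [h2]
      rw [lintegral_indicator measurableSet_Ioi, Measure.restrict_restrict measurableSet_Ioi,
        Set.Ioi_inter_Ioi, max_eq_left hdy.le]
    rw [h1, edist_dist, dist_comm x y]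
    exact auxKernel p _ hp hdy
  rw [lintegral_congr_ae hstep1, lintegral_const_mul' _ _ ENNReal.ofReal_ne_top]
  congr 1
  have hswap : ∫⁻ y, (∫⁻ r in Set.Ioi (0 : ℝ), f y r) ∂ν
      = ∫⁻ r in Set.Ioi (0 : ℝ), ∫⁻ y, f y r ∂ν := by
    apply lintegral_lintegral_swap
    apply Measurable.aemeasurable
    apply Measurable.ite
    · exact (isOpen_lt (continuous_fst.dist continuous_const) continuous_snd).measurableSet
    · exact (measurable_snd.pow_const _).ennreal_ofReal
    · exact measurable_const
  rw [hswap]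
  apply lintegral_congr
  intro r
  have h3 : ∀ y : X, f y r =
      (ball x r).indicator (fun _ => ENNReal.ofReal (r ^ (-p - 1))) y := by
    intro y
    simp only [hf]
    by_cases h : dist y x < r
    · rw [if_pos h, Set.indicator_of_mem (mem_ball.mpr h)]
    · rw [if_neg h, Set.indicator_of_notMem (fun hm => h (mem_ball.mp hm))]
  simp_rw [h3]
  rw [lintegral_indicator measurableSet_ball, setLIntegral_const, mul_comm]

end Aux

/-- If a compact, upper Ahlfors `d`-regular set `E` of positive `ℋ^d`-measure has
constant second-order density `σ_d(E)` at `ℋ^d`-a.e. point, then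
`liminf_{p↗d} Cap_p(E)^p/(d−p) ≥ ℋ^d(E)/(d σ_d(E))`. -/
theorem cap_liminf_ge_of_constant_secondDensity (d : ℝ) (hd : 0 < d) (n : ℕ) (hn : 1 ≤ n)
    (E : Set (EuclideanSpace ℝ (Fin n))) (hE : IsCompact E)
    (C : ℝ) (hC : 0 < C)
    (hAhlfors : ∀ x ∈ E, ∀ r : ℝ, 0 < r → r ≤ diam E →
      μH[d] (ball x r ∩ E) ≤ ENNReal.ofReal (C * r ^ d))
    (hpos : 0 < μH[d] E)
    (σ : ℝ) (hσ : 0 < σ)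
    (hdensity : ∀ᵐ x ∂(μH[d].restrict E),
      Tendsto (fun p : ℝ => ENNReal.ofReal (d - p) *
          ∫⁻ r in Set.Ioc (0 : ℝ) 1, μH[d] (ball x r ∩ E) * ENNReal.ofReal (r ^ (-p - 1)))
        (𝓝[<] d) (𝓝 (ENNReal.ofReal σ))) :
    μH[d] E / ENNReal.ofReal (d * σ) ≤
      liminf (fun p : ℝ => rieszCap n p E ^ p / ENNReal.ofReal (d - p)) (𝓝[<] d) := by
  classical
  have hEm : MeasurableSet E := hE.isClosed.measurableSet
  haveI hNA : NullSingletonClass (μH[d] : Measure (EuclideanSpace ℝ (Fin n))) :=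
    Measure.noAtoms_hausdorff _ hd
  set ν : Measure (EuclideanSpace ℝ (Fin n)) := μH[d].restrict E with hνdef
  have hνuniv : ν Set.univ = μH[d] E := by rw [hνdef, Measure.restrict_apply_univ]
  have hEne : E.Nonempty := by
    rcases E.eq_empty_or_nonempty with h | h
    · rw [h] at hpos; simp at hpos
    · exact h
  obtain ⟨x₀, hx₀⟩ := hEne
  have hdiam : 0 < diam E := by
    rcases lt_or_eq_of_le (diam_nonneg (s := E)) with h | h
    · exact h
    · exfalso
      have hsub : E ⊆ {x₀} := by
        intro y hy
        have h1 := dist_le_diam_of_mem hE.isBounded hy hx₀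
        rw [← h] at h1
        have h2 : dist y x₀ = 0 := le_antisymm h1 dist_nonneg
        simpa [dist_eq_zero] using h2
      have h3 : μH[d] E ≤ μH[d] {x₀} := measure_mono hsub
      rw [measure_singleton] at h3
      exact absurd (le_antisymm h3 zero_le) hpos.ne'
  have hMtop : μH[d] E ≠ ∞ := by
    have hcov : E ⊆ ⋃ x ∈ E, ball x (diam E) := fun y hy =>
      Set.mem_biUnion hy (mem_ball_self hdiam)
    obtain ⟨t, hts, htfin, htcov⟩ :=
      hE.elim_finite_subcover_image (fun x _ => isOpen_ball) hcov
    have hEsub : E ⊆ ⋃ x ∈ htfin.toFinset, (ball x (diam E) ∩ E) := by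
      intro y hy
      obtain ⟨x, hx, hyx⟩ := Set.mem_iUnion₂.mp (htcov hy)
      exact Set.mem_biUnion (htfin.mem_toFinset.mpr hx) ⟨hyx, hy⟩
    have h1 : μH[d] E ≤ ∑ x ∈ htfin.toFinset, μH[d] (ball x (diam E) ∩ E) :=
      (measure_mono hEsub).trans (measure_biUnion_finset_le _ _)
    have h2 : ∑ x ∈ htfin.toFinset, μH[d] (ball x (diam E) ∩ E) < ∞ := by
      refine ENNReal.sum_lt_top.mpr fun x hx => ?_
      exact lt_of_le_of_lt (hAhlfors x (hts (htfin.mem_toFinset.mp hx)) _ hdiam le_rfl)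
        ENNReal.ofReal_lt_top
    exact (h1.trans_lt h2).ne
  haveI : IsFiniteMeasure ν := ⟨by rw [hνuniv]; exact hMtop.lt_top⟩
  set M := μH[d] E with hMdef
  have hM0 : M ≠ 0 := hpos.ne'
  -- the improved Ahlfors constant valid on all of `Ioc 0 1`
  set Dm := min (diam E) 1 with hDmdef
  have hDm : 0 < Dm := lt_min hdiam one_pos
  set Mr := M.toReal with hMrdef
  have hMMr : M = ENNReal.ofReal Mr := (ENNReal.ofReal_toReal hMtop).symm
  have hMr0 : 0 ≤ Mr := ENNReal.toReal_nonneg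
  have hDmd : 0 < Dm ^ d := Real.rpow_pos_of_pos hDm d
  set C2 := C + Mr / Dm ^ d with hC2def
  have hC2pos : 0 < C2 := add_pos_of_pos_of_nonneg hC (div_nonneg hMr0 hDmd.le)
  have hball2 : ∀ x ∈ E, ∀ r : ℝ, r ∈ Set.Ioc (0:ℝ) 1 →
      μH[d] (ball x r ∩ E) ≤ ENNReal.ofReal (C2 * r ^ d) := by
    intro x hx r hr
    rcases le_or_gt r (diam E) with hrd | hrd
    · refine (hAhlfors x hx r hr.1 hrd).trans (ENNReal.ofReal_le_ofReal ?_)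
      have h0 : 0 ≤ r ^ d := Real.rpow_nonneg hr.1.le d
      have h1 : C ≤ C2 := by
        rw [hC2def]; nlinarith [div_nonneg hMr0 hDmd.le]
      exact mul_le_mul_of_nonneg_right h1 h0
    · have h1 : μH[d] (ball x r ∩ E) ≤ M := measure_mono Set.inter_subset_right
      refine h1.trans ?_
      rw [hMMr]
      apply ENNReal.ofReal_le_ofReal
      have hDmr : Dm ≤ r := le_trans (min_le_left _ _) hrd.le
      have h2 : Dm ^ d ≤ r ^ d := Real.rpow_le_rpow hDm.le hDmr hd.le
      have h3 : Mr ≤ Mr / Dm ^ d * r ^ d := by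
        rw [div_mul_eq_mul_div, le_div_iff₀ hDmd]
        exact mul_le_mul_of_nonneg_left h2 hMr0
      refine h3.trans ?_
      have h4 : Mr / Dm ^ d ≤ C2 := by rw [hC2def]; linarith
      exact mul_le_mul_of_nonneg_right h4 (Real.rpow_nonneg (le_trans hDm.le hDmr) d)
  have hsing : ∀ x : EuclideanSpace ℝ (Fin n), ν {x} = 0 := by
    intro x
    rw [hνdef, Measure.restrict_apply (measurableSet_singleton x)]
    exact le_antisymm ((measure_mono Set.inter_subset_left).trans_eq (measure_singleton x))
      zero_le
  -- the representation of the potential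
  have hrep : ∀ p : ℝ, 0 < p → ∀ x, (∫⁻ y, edist x y ^ (-p) ∂ν) =
      ENNReal.ofReal p * ∫⁻ r in Set.Ioi (0:ℝ),
        μH[d] (ball x r ∩ E) * ENNReal.ofReal (r ^ (-p - 1)) := by
    intro p hp x
    rw [auxRep ν hp x (hsing x)]
    congr 1
    apply lintegral_congr
    intro r
    rw [hνdef, Measure.restrict_apply measurableSet_ball]
  -- truncated potential
  set A : ℝ → EuclideanSpace ℝ (Fin n) → ℝ≥0∞ := fun p x =>
    ∫⁻ r in Set.Ioc (0:ℝ) 1, μH[d] (ball x r ∩ E) * ENNReal.ofReal (r ^ (-p - 1)) with hAdef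
  have hsplit : ∀ p : ℝ, 0 < p → ∀ x, (∫⁻ y, edist x y ^ (-p) ∂ν) ≤
      ENNReal.ofReal p * A p x + M := by
    intro p hp x
    rw [hrep p hp x]
    have hU : Set.Ioi (0:ℝ) = Set.Ioc 0 1 ∪ Set.Ioi 1 :=
      (Set.Ioc_union_Ioi_eq_Ioi zero_le_one).symm
    rw [hU, lintegral_union measurableSet_Ioi (Set.Ioc_disjoint_Ioi le_rfl), mul_add]
    refine add_le_add le_rfl ?_
    have htail : ∫⁻ r in Set.Ioi (1:ℝ), μH[d] (ball x r ∩ E) * ENNReal.ofReal (r ^ (-p - 1))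
        ≤ M * ENNReal.ofReal (1 / p) := by
      have hle : ∀ r : ℝ, μH[d] (ball x r ∩ E) * ENNReal.ofReal (r ^ (-p - 1)) ≤
          M * ENNReal.ofReal (r ^ (-p - 1)) :=
        fun r => mul_le_mul_left (measure_mono Set.inter_subset_right) _
      refine (lintegral_mono hle).trans ?_
      rw [lintegral_const_mul' _ _ hMtop, auxLintIoi p 1 hp one_pos]
      simp [Real.one_rpow]
    calc ENNReal.ofReal p *
          ∫⁻ r in Set.Ioi (1:ℝ), μH[d] (ball x r ∩ E) * ENNReal.ofReal (r ^ (-p - 1))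
        ≤ ENNReal.ofReal p * (M * ENNReal.ofReal (1 / p)) := mul_le_mul_right htail _
      _ = M * (ENNReal.ofReal p * ENNReal.ofReal (1 / p)) := by ring
      _ = M * ENNReal.ofReal (p * (1 / p)) := by rw [ENNReal.ofReal_mul hp.le]
      _ = M := by rw [mul_one_div_cancel hp.ne', ENNReal.ofReal_one, mul_one]
  -- energy bound
  have hEnBound : ∀ p ∈ Set.Ioo (0:ℝ) d,
      ENNReal.ofReal (d - p) * rieszEnergy p ν ≤
        ENNReal.ofReal d * (∫⁻ x, ENNReal.ofReal (d - p) * A p x ∂ν)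
          + ENNReal.ofReal (d - p) * (M * M) := by
    intro p hp
    have h1 : rieszEnergy p ν ≤ ∫⁻ x, (ENNReal.ofReal p * A p x + M) ∂ν :=
      lintegral_mono fun x => hsplit p hp.1 x
    rw [lintegral_add_right _ measurable_const, lintegral_const, hνuniv,
      lintegral_const_mul' _ _ ENNReal.ofReal_ne_top] at h1
    calc ENNReal.ofReal (d - p) * rieszEnergy p ν
        ≤ ENNReal.ofReal (d - p) *
            (ENNReal.ofReal p * (∫⁻ x, A p x ∂ν) + M * M) := mul_le_mul_right h1 _
      _ = ENNReal.ofReal p * (ENNReal.ofReal (d - p) * (∫⁻ x, A p x ∂ν))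
            + ENNReal.ofReal (d - p) * (M * M) := by ring
      _ = ENNReal.ofReal p * (∫⁻ x, ENNReal.ofReal (d - p) * A p x ∂ν)
            + ENNReal.ofReal (d - p) * (M * M) := by
          rw [lintegral_const_mul' _ _ ENNReal.ofReal_ne_top]
      _ ≤ ENNReal.ofReal d * (∫⁻ x, ENNReal.ofReal (d - p) * A p x ∂ν)
            + ENNReal.ofReal (d - p) * (M * M) := by
          exact add_le_add (mul_le_mul_left (ENNReal.ofReal_le_ofReal hp.2.le) _) le_rfl
  -- measurability
  have hGmeas : ∀ p : ℝ, Measurable fun x => ENNReal.ofReal (d - p) * A p x := by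
    intro p
    apply Measurable.const_mul
    have hb : Measurable fun q : EuclideanSpace ℝ (Fin n) × ℝ => ν (ball q.1 q.2) :=
      auxMeasBall ν
    have key : Measurable fun x : EuclideanSpace ℝ (Fin n) => ∫⁻ r, (fun q : EuclideanSpace ℝ (Fin n) × ℝ =>
        ν (ball q.1 q.2) * ENNReal.ofReal (q.2 ^ (-p - 1))) (x, r)
          ∂(volume.restrict (Set.Ioc (0:ℝ) 1)) :=
      (hb.mul ((measurable_snd.pow_const _).ennreal_ofReal)).lintegral_prod_right'
    have hA : A p = fun x => ∫⁻ r, (fun q : EuclideanSpace ℝ (Fin n) × ℝ =>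
        ν (ball q.1 q.2) * ENNReal.ofReal (q.2 ^ (-p - 1))) (x, r)
          ∂(volume.restrict (Set.Ioc (0:ℝ) 1)) := by
      funext x
      apply lintegral_congr
      intro r
      simp [hνdef, Measure.restrict_apply measurableSet_ball]
    exact hA ▸ key
  -- dominated convergence
  have hDCT : Tendsto (fun p : ℝ => ∫⁻ x, ENNReal.ofReal (d - p) * A p x ∂ν) (𝓝[<] d)
      (𝓝 (ENNReal.ofReal σ * M)) := by
    have hconst : ∫⁻ _x, ENNReal.ofReal σ ∂ν = ENNReal.ofReal σ * M := by
      rw [lintegral_const, hνuniv]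
    have hlim := tendsto_lintegral_filter_of_dominated_convergence (μ := ν)
      (F := fun p x => ENNReal.ofReal (d - p) * A p x) (f := fun _ => ENNReal.ofReal σ)
      (l := 𝓝[<] d) (fun _ => ENNReal.ofReal C2)
      (Eventually.of_forall fun p => hGmeas p)
      ?_ ?_ hdensity
    · rwa [hconst] at hlim
    · -- bound
      filter_upwards [self_mem_nhdsWithin] with p hp
      have hpd : p < d := hp
      filter_upwards [ae_restrict_mem hEm] with x hx
      have hple : (-1:ℝ) < d - p - 1 := by linarith
      have hint : A p x ≤ ENNReal.ofReal C2 * ENNReal.ofReal (1 / (d - p)) := by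
        have hmono : A p x ≤ ∫⁻ r in Set.Ioc (0:ℝ) 1,
            ENNReal.ofReal (C2 * r ^ d) * ENNReal.ofReal (r ^ (-p - 1)) := by
          rw [hAdef]
          apply lintegral_mono_ae
          filter_upwards [ae_restrict_mem measurableSet_Ioc] with r hr
          exact mul_le_mul_left (hball2 x hx r hr) _
        have heq : ∫⁻ r in Set.Ioc (0:ℝ) 1,
            ENNReal.ofReal (C2 * r ^ d) * ENNReal.ofReal (r ^ (-p - 1))
            = ENNReal.ofReal C2 * ∫⁻ r in Set.Ioc (0:ℝ) 1,
                ENNReal.ofReal (r ^ (d - p - 1)) := by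
          rw [← lintegral_const_mul' _ _ ENNReal.ofReal_ne_top]
          apply lintegral_congr_ae
          filter_upwards [ae_restrict_mem measurableSet_Ioc] with r hr
          rw [ENNReal.ofReal_mul hC2pos.le, mul_assoc,
            ← ENNReal.ofReal_mul (Real.rpow_nonneg hr.1.le d),
            ← Real.rpow_add hr.1]
          congr 2
          ring
        have hval : ∫⁻ r in Set.Ioc (0:ℝ) 1, ENNReal.ofReal (r ^ (d - p - 1))
            = ENNReal.ofReal (1 / (d - p)) := by
          rw [auxLintIoc _ hple]
          congr 2
          ring
        calc A p x ≤ _ := hmono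
          _ = _ := heq
          _ = ENNReal.ofReal C2 * ENNReal.ofReal (1 / (d - p)) := by rw [hval]
      calc ENNReal.ofReal (d - p) * A p x
          ≤ ENNReal.ofReal (d - p) * (ENNReal.ofReal C2 * ENNReal.ofReal (1 / (d - p))) :=
            mul_le_mul_right hint _
        _ = ENNReal.ofReal C2 * (ENNReal.ofReal (d - p) * ENNReal.ofReal (1 / (d - p))) := by
            ring
        _ = ENNReal.ofReal C2 * ENNReal.ofReal ((d - p) * (1 / (d - p))) := by
            rw [ENNReal.ofReal_mul (by linarith : (0:ℝ) ≤ d - p)]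
        _ = ENNReal.ofReal C2 := by
            rw [mul_one_div_cancel (by linarith : d - p ≠ 0), ENNReal.ofReal_one, mul_one]
    · rw [lintegral_const, hνuniv]
      exact ENNReal.mul_ne_top ENNReal.ofReal_ne_top hMtop
  -- capacity bound via the normalized measure
  have hV : ∀ p : ℝ, rieszV n p E ≤ M⁻¹ * (M⁻¹ * rieszEnergy p ν) := by
    intro p
    set μ1 : Measure (EuclideanSpace ℝ (Fin n)) := M⁻¹ • ν with hμ1
    have hμ1prob : IsProbabilityMeasure μ1 := by
      constructor
      rw [hμ1, Measure.smul_apply, smul_eq_mul, hνuniv]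
      exact ENNReal.inv_mul_cancel hM0 hMtop
    have hμ1null : μ1 Eᶜ = 0 := by
      rw [hμ1, Measure.smul_apply, smul_eq_mul, hνdef, Measure.restrict_apply hEm.compl,
        Set.compl_inter_self, measure_empty, mul_zero]
    have hen : rieszEnergy p μ1 = M⁻¹ * (M⁻¹ * rieszEnergy p ν) := by
      rw [hμ1]
      simp only [rieszEnergy]
      rw [lintegral_smul_measure]
      congr 1
      rw [← lintegral_const_mul' _ _ (ENNReal.inv_ne_top.mpr hM0)]
      apply lintegral_congr
      intro x
      rw [lintegral_smul_measure, smul_eq_mul]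
    calc rieszV n p E ≤ rieszEnergy p μ1 := by
          refine iInf_le_of_le μ1 ?_
          refine iInf_le_of_le hμ1prob ?_
          exact iInf_le _ hμ1null
      _ = _ := hen
  -- final assembly
  apply le_of_forall_lt
  intro c hc
  obtain ⟨c', hcc', hc'⟩ := exists_between hc
  have hev : ∀ᶠ p in 𝓝[<] d, c' ≤ rieszCap n p E ^ p / ENNReal.ofReal (d - p) := by
    rcases eq_or_ne c' 0 with rfl | hc'0
    · exact Eventually.of_forall fun _ => zero_le
    have hdσpos : 0 < d * σ := mul_pos hd hσ
    have hdσ0 : ENNReal.ofReal (d * σ) ≠ 0 := (ENNReal.ofReal_pos.mpr hdσpos).ne'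
    have hc'top : c' ≠ ∞ := (hc'.trans (ENNReal.div_lt_top hMtop hdσ0)).ne
    have hstep1 : c' * ENNReal.ofReal (d * σ) < M :=
      (ENNReal.lt_div_iff_mul_lt (Or.inl hdσ0) (Or.inl ENNReal.ofReal_ne_top)).mp hc'
    set K : ℝ≥0∞ := M * M / c' with hK
    have hL0K : ENNReal.ofReal (d * σ) * M < K := by
      rw [hK, ENNReal.lt_div_iff_mul_lt (Or.inl hc'0) (Or.inl hc'top)]
      calc ENNReal.ofReal (d * σ) * M * c' = c' * ENNReal.ofReal (d * σ) * M := by ring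
        _ < M * M := by
          rw [mul_comm (c' * ENNReal.ofReal (d * σ)) M]; exact ENNReal.mul_lt_mul_right hM0 hMtop hstep1
    have htR : Tendsto (fun p : ℝ =>
        ENNReal.ofReal d * (∫⁻ x, ENNReal.ofReal (d - p) * A p x ∂ν)
          + ENNReal.ofReal (d - p) * (M * M)) (𝓝[<] d)
        (𝓝 (ENNReal.ofReal (d * σ) * M)) := by
      have h1 : Tendsto (fun p : ℝ =>
          ENNReal.ofReal d * (∫⁻ x, ENNReal.ofReal (d - p) * A p x ∂ν)) (𝓝[<] d)
          (𝓝 (ENNReal.ofReal d * (ENNReal.ofReal σ * M))) :=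
        ENNReal.Tendsto.const_mul hDCT (Or.inr ENNReal.ofReal_ne_top)
      have h2 : Tendsto (fun p : ℝ => ENNReal.ofReal (d - p) * (M * M)) (𝓝[<] d) (𝓝 0) := by
        have h3 : Tendsto (fun p : ℝ => d - p) (𝓝[<] d) (𝓝 0) := by
          have h4 : Tendsto (fun p : ℝ => d - p) (𝓝 d) (𝓝 (d - d)) :=
            (continuous_const.sub continuous_id).tendsto d
          rw [sub_self] at h4
          exact h4.mono_left nhdsWithin_le_nhds
        have h5 : Tendsto (fun p : ℝ => ENNReal.ofReal (d - p)) (𝓝[<] d) (𝓝 0) := by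
          have := ENNReal.tendsto_ofReal h3
          simpa using this
        have h6 := ENNReal.Tendsto.mul_const h5
          (Or.inr (ENNReal.mul_ne_top hMtop hMtop))
        simpa using h6
      have h7 := h1.add h2
      rw [add_zero] at h7
      have h8 : ENNReal.ofReal d * (ENNReal.ofReal σ * M) = ENNReal.ofReal (d * σ) * M := by
        rw [← mul_assoc, ← ENNReal.ofReal_mul hd.le]
      rwa [h8] at h7
    have hevR := htR.eventually_lt_const hL0K
    have hIoo : Set.Ioo (0:ℝ) d ∈ 𝓝[<] d := Ioo_mem_nhdsLT_of_mem ⟨hd, le_rfl⟩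
    filter_upwards [hevR, hIoo] with p hRp hp
    have hp0 : 0 < p := hp.1
    have hpd : p < d := hp.2
    have hdp0 : ENNReal.ofReal (d - p) ≠ 0 := (ENNReal.ofReal_pos.mpr (by linarith)).ne'
    have hchain : ENNReal.ofReal (d - p) * rieszV n p E ≤ M⁻¹ * M⁻¹ * K := by
      calc ENNReal.ofReal (d - p) * rieszV n p E
          ≤ ENNReal.ofReal (d - p) * (M⁻¹ * (M⁻¹ * rieszEnergy p ν)) :=
            mul_le_mul_right (hV p) _
        _ = M⁻¹ * M⁻¹ * (ENNReal.ofReal (d - p) * rieszEnergy p ν) := by ring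
        _ ≤ M⁻¹ * M⁻¹ *
              (ENNReal.ofReal d * (∫⁻ x, ENNReal.ofReal (d - p) * A p x ∂ν)
                + ENNReal.ofReal (d - p) * (M * M)) :=
            mul_le_mul_right (hEnBound p hp) _
        _ ≤ M⁻¹ * M⁻¹ * K := mul_le_mul_right hRp.le _
    have hcap : rieszCap n p E ^ p = (rieszV n p E)⁻¹ := by
      rw [rieszCap, ← ENNReal.rpow_mul]
      have h9 : (-1 / p) * p = -1 := by field_simp
      rw [h9, ENNReal.rpow_neg_one]
    have h5 : M⁻¹ * M⁻¹ * K = c'⁻¹ := by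
      rw [hK, ← mul_div_assoc]
      have h6 : M⁻¹ * M⁻¹ * (M * M) = 1 := by
        calc M⁻¹ * M⁻¹ * (M * M) = (M⁻¹ * M) * (M⁻¹ * M) := by ring
          _ = 1 := by rw [ENNReal.inv_mul_cancel hM0 hMtop, one_mul]
      rw [h6, one_div]
    have h4 : (rieszV n p E)⁻¹ / ENNReal.ofReal (d - p)
        = (ENNReal.ofReal (d - p) * rieszV n p E)⁻¹ := by
      rw [ENNReal.mul_inv (Or.inl hdp0) (Or.inl ENNReal.ofReal_ne_top), div_eq_mul_inv,
        mul_comm]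
    rw [hcap, h4]
    calc c' = (c'⁻¹)⁻¹ := (inv_inv c').symm
      _ ≤ (ENNReal.ofReal (d - p) * rieszV n p E)⁻¹ := by
          apply ENNReal.inv_le_inv.mpr
          rw [← h5]
          exact hchain
  have hlim : c' ≤ liminf (fun p : ℝ => rieszCap n p E ^ p / ENNReal.ofReal (d - p)) (𝓝[<] d) :=
    le_liminf_of_le (by isBoundedDefault) hev
  exact lt_of_lt_of_le hcc' hlim
end

section
/- For a finite Borel measure μ on ℝ^n and x ∈ ℝ^n: if the first-order density ρ_d(μ,x) = lim_{r↘0} μ(B^n(x,r))/r^d exists and is finite, then the second-order density σ_d(μ,x) = lim_{p↗d} (d−p) ∫₀¹ μ(B^n(x,r)) r^{−p−1} dr also exists and σ_d(μ,x) = ρ_d(μ,x). -/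
open MeasureTheory Metric Filter Topology ENNReal

lemma key_rpow_lintegral (ε a : ℝ) (hε : 0 < ε) (ha : 0 < a) :
    ∫⁻ r in Set.Ioc (0 : ℝ) a, ENNReal.ofReal (r ^ (ε - 1)) =
      ENNReal.ofReal (a ^ ε / ε) := by
  have hint : IntegrableOn (fun r : ℝ => r ^ (ε - 1)) (Set.Ioc 0 a) := by
    have h := intervalIntegral.intervalIntegrable_rpow' (a := 0) (b := a) (show (-1:ℝ) < ε - 1 by linarith)
    rwa [intervalIntegrable_iff_integrableOn_Ioc_of_le ha.le] at h
  have hnn : 0 ≤ᵐ[volume.restrict (Set.Ioc (0:ℝ) a)] fun r : ℝ => r ^ (ε - 1) := by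
    refine (ae_restrict_iff' measurableSet_Ioc).2 (ae_of_all _ fun r hr => ?_)
    exact Real.rpow_nonneg hr.1.le _
  rw [← ofReal_integral_eq_lintegral_ofReal hint hnn]
  congr 1
  rw [← intervalIntegral.integral_of_le ha.le,
    integral_rpow (Or.inl (show (-1:ℝ) < ε - 1 by linarith)), sub_add_cancel,
    Real.zero_rpow hε.ne', sub_zero]

/-- If the first-order density `ρ_d(μ,x) = lim_{r↘0} μ(B(x,r))/r^d` of a finite Borel
measure exists and is finite, then the second-order density
`σ_d(μ,x) = lim_{p↗d} (d−p)∫₀¹ μ(B(x,r)) r^{−p−1} dr` exists and equals it. -/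
theorem secondDensity_eq_firstDensity (n : ℕ) (d : ℝ) (hd : 0 < d)
    (μ : Measure (EuclideanSpace ℝ (Fin n))) [IsFiniteMeasure μ]
    (x : EuclideanSpace ℝ (Fin n)) (ρ : ℝ≥0∞) (hρ : ρ ≠ ⊤)
    (hfirst : Tendsto (fun r : ℝ => μ (ball x r) / ENNReal.ofReal (r ^ d))
      (𝓝[>] 0) (𝓝 ρ)) :
    Tendsto (fun p : ℝ => ENNReal.ofReal (d - p) *
        ∫⁻ r in Set.Ioc (0 : ℝ) 1, μ (ball x r) * ENNReal.ofReal (r ^ (-p - 1)))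
      (𝓝[<] d) (𝓝 ρ) := by
  set g : ℝ → ℝ≥0∞ := fun r => μ (ball x r) with hg_def
  rw [ENNReal.tendsto_nhds hρ]
  intro δ hδ0
  set δ' : ℝ≥0∞ := min δ 1 with hδ'_def
  have hδ'0 : 0 < δ' := lt_min hδ0 zero_lt_one
  have hδ't : δ' ≠ ⊤ := ne_top_of_le_ne_top one_ne_top (min_le_right _ _)
  have hhalf0 : 0 < δ' / 2 := ENNReal.half_pos hδ'0.ne'
  -- reduce to δ'
  suffices h : ∀ᶠ p in 𝓝[<] d, (ENNReal.ofReal (d - p) *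
      ∫⁻ r in Set.Ioc (0 : ℝ) 1, g r * ENNReal.ofReal (r ^ (-p - 1)))
      ∈ Set.Icc (ρ - δ') (ρ + δ') by
    refine h.mono fun p hp => ⟨le_trans ?_ hp.1, le_trans hp.2 ?_⟩
    · exact tsub_le_tsub_left (min_le_left _ _) ρ
    · exact add_le_add_right (min_le_left _ _) ρ
  -- extract r₀ from hfirst
  have hmem : ∀ᶠ r in 𝓝[>] (0:ℝ),
      g r / ENNReal.ofReal (r ^ d) ∈ Set.Icc (ρ - δ' / 2) (ρ + δ' / 2) :=
    (ENNReal.tendsto_nhds hρ).1 hfirst (δ' / 2) hhalf0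
  obtain ⟨u, hu0, hu⟩ := mem_nhdsGT_iff_exists_Ioc_subset.1 hmem
  set r₀ : ℝ := min u 1 with hr₀_def
  have hr₀0 : 0 < r₀ := lt_min hu0 zero_lt_one
  have hr₀1 : r₀ ≤ 1 := min_le_right _ _
  have hbounds : ∀ r ∈ Set.Ioc (0:ℝ) r₀,
      (ρ - δ' / 2) * ENNReal.ofReal (r ^ d) ≤ g r ∧
      g r ≤ (ρ + δ' / 2) * ENNReal.ofReal (r ^ d) := by
    intro r hr
    have hrpos : 0 < r := hr.1
    have hrd : ENNReal.ofReal (r ^ d) ≠ 0 :=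
      (ENNReal.ofReal_pos.2 (Real.rpow_pos_of_pos hrpos d)).ne'
    have hrdt : ENNReal.ofReal (r ^ d) ≠ ⊤ := ofReal_ne_top
    have hmem' := hu ⟨hrpos, hr.2.trans (min_le_left _ _)⟩
    constructor
    · exact (ENNReal.le_div_iff_mul_le (Or.inl hrd) (Or.inl hrdt)).1 hmem'.1
    · exact (ENNReal.div_le_iff hrd hrdt).1 hmem'.2
  -- tail constant
  set C : ℝ≥0∞ := μ Set.univ * ENNReal.ofReal (r₀ ^ (-d - 1)) with hC_def
  have hCt : C ≠ ⊤ := mul_ne_top (measure_ne_top μ _) ofReal_ne_top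
  -- three eventual facts
  have hev1 : Set.Ioo (0:ℝ) d ∈ 𝓝[<] d := Ioo_mem_nhdsLT_of_mem ⟨hd, le_refl d⟩
  have hsubt : Tendsto (fun p : ℝ => d - p) (𝓝[<] d) (𝓝 0) := by
    have : Tendsto (fun p : ℝ => d - p) (𝓝 d) (𝓝 (d - d)) :=
      (continuous_const.sub continuous_id).tendsto d
    rw [sub_self] at this
    exact this.mono_left nhdsWithin_le_nhds
  have hev2 : ∀ᶠ p in 𝓝[<] d, ENNReal.ofReal (d - p) * C < δ' / 2 := by
    have h1 : Tendsto (fun p : ℝ => ENNReal.ofReal (d - p) * C) (𝓝[<] d) (𝓝 0) := by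
      have := ENNReal.Tendsto.mul_const (ENNReal.tendsto_ofReal hsubt) (b := C) (Or.inr hCt)
      simpa using this
    exact h1.eventually_lt_const hhalf0
  have hrt : Tendsto (fun p : ℝ => (ρ - δ' / 2) * ENNReal.ofReal (r₀ ^ (d - p)))
      (𝓝[<] d) (𝓝 (ρ - δ' / 2)) := by
    have hc : Tendsto (fun p : ℝ => r₀ ^ (d - p)) (𝓝[<] d) (𝓝 1) := by
      have hcont : Continuous fun p : ℝ => Real.exp (Real.log r₀ * (d - p)) :=
        (Real.continuous_exp.comp (continuous_const.mul
          (continuous_const.sub continuous_id)))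
      have heq : (fun p : ℝ => r₀ ^ (d - p)) =
          fun p : ℝ => Real.exp (Real.log r₀ * (d - p)) := by
        funext p; rw [Real.rpow_def_of_pos hr₀0]
      rw [heq]
      have := (hcont.tendsto d).mono_left (nhdsWithin_le_nhds (s := Set.Iio d))
      simpa using this
    have h1 : Tendsto (fun p : ℝ => ENNReal.ofReal (r₀ ^ (d - p))) (𝓝[<] d) (𝓝 1) := by
      simpa using ENNReal.tendsto_ofReal hc
    have := ENNReal.Tendsto.const_mul (a := ρ - δ' / 2) h1 (Or.inl one_ne_zero)
    simpa using this
  have hev3 : ∀ᶠ p in 𝓝[<] d, ρ - δ' ≤ (ρ - δ' / 2) * ENNReal.ofReal (r₀ ^ (d - p)) := by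
    rcases eq_or_ne (ρ - δ') 0 with h0 | h0
    · exact Eventually.of_forall fun p => h0 ▸ zero_le
    · have hδρ : δ' ≤ ρ := by
        by_contra h
        exact h0 (tsub_eq_zero_of_le (le_of_not_ge h))
      have hlt : ρ - δ' < ρ - δ' / 2 := by
        refine ((ENNReal.cancel_of_ne hρ).tsub_lt_tsub_iff_left_of_le
          (ENNReal.cancel_of_ne hδ't) hδρ).2 ?_
        exact ENNReal.half_lt_self hδ'0.ne' hδ't
      exact (hrt.eventually_const_lt hlt).mono fun p hp => hp.le
  filter_upwards [hev1, hev2, hev3] with p hp h2 h3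
  have hp0 : 0 < p := hp.1
  have hpd : p < d := hp.2
  have hε : 0 < d - p := by linarith
  set I₁ : ℝ≥0∞ := ∫⁻ r in Set.Ioc (0:ℝ) r₀, g r * ENNReal.ofReal (r ^ (-p - 1)) with hI₁
  set I₂ : ℝ≥0∞ := ∫⁻ r in Set.Ioc r₀ 1, g r * ENNReal.ofReal (r ^ (-p - 1)) with hI₂
  have hsplit : (∫⁻ r in Set.Ioc (0:ℝ) 1, g r * ENNReal.ofReal (r ^ (-p - 1))) = I₁ + I₂ := by
    rw [← Set.Ioc_union_Ioc_eq_Ioc hr₀0.le hr₀1,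
      lintegral_union measurableSet_Ioc (Set.Ioc_disjoint_Ioc_of_le le_rfl)]
  -- key integral computation on (0, r₀]
  have hkey : (∫⁻ r in Set.Ioc (0:ℝ) r₀, ENNReal.ofReal (r ^ (d - p - 1))) =
      ENNReal.ofReal (r₀ ^ (d - p) / (d - p)) := by
    have := key_rpow_lintegral (d - p) r₀ hε hr₀0
    simpa using this
  have hprod : ∀ r ∈ Set.Ioc (0:ℝ) r₀,
      ENNReal.ofReal (r ^ d) * ENNReal.ofReal (r ^ (-p - 1)) =
        ENNReal.ofReal (r ^ (d - p - 1)) := by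
    intro r hr
    rw [← ENNReal.ofReal_mul (Real.rpow_nonneg hr.1.le _),
      ← Real.rpow_add hr.1]
    ring_nf
  have hEr : ENNReal.ofReal (d - p) * ENNReal.ofReal (r₀ ^ (d - p) / (d - p)) =
      ENNReal.ofReal (r₀ ^ (d - p)) := by
    rw [← ENNReal.ofReal_mul hε.le, mul_comm, div_mul_cancel₀ _ hε.ne']
  -- upper bound for I₁
  have hI₁up : I₁ ≤ (ρ + δ' / 2) * ENNReal.ofReal (r₀ ^ (d - p) / (d - p)) := by
    calc I₁ ≤ ∫⁻ r in Set.Ioc (0:ℝ) r₀,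
          (ρ + δ' / 2) * (ENNReal.ofReal (r ^ d) * ENNReal.ofReal (r ^ (-p - 1))) := by
          refine setLIntegral_mono' measurableSet_Ioc fun r hr => ?_
          rw [← mul_assoc]
          exact mul_le_mul_left (hbounds r hr).2 _
      _ = (ρ + δ' / 2) * ∫⁻ r in Set.Ioc (0:ℝ) r₀,
            ENNReal.ofReal (r ^ d) * ENNReal.ofReal (r ^ (-p - 1)) :=
          lintegral_const_mul' _ _ (by
            exact ENNReal.add_ne_top.2 ⟨hρ, ne_top_of_le_ne_top hδ't (ENNReal.half_le_self)⟩)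
      _ = (ρ + δ' / 2) * ∫⁻ r in Set.Ioc (0:ℝ) r₀, ENNReal.ofReal (r ^ (d - p - 1)) := by
          congr 1
          exact setLIntegral_congr_fun measurableSet_Ioc hprod
      _ = (ρ + δ' / 2) * ENNReal.ofReal (r₀ ^ (d - p) / (d - p)) := by rw [hkey]
  -- lower bound for I₁
  have hI₁lo : (ρ - δ' / 2) * ENNReal.ofReal (r₀ ^ (d - p) / (d - p)) ≤ I₁ := by
    calc (ρ - δ' / 2) * ENNReal.ofReal (r₀ ^ (d - p) / (d - p))
        = (ρ - δ' / 2) * ∫⁻ r in Set.Ioc (0:ℝ) r₀, ENNReal.ofReal (r ^ (d - p - 1)) := by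
          rw [hkey]
      _ = (ρ - δ' / 2) * ∫⁻ r in Set.Ioc (0:ℝ) r₀,
            ENNReal.ofReal (r ^ d) * ENNReal.ofReal (r ^ (-p - 1)) := by
          congr 1
          exact (setLIntegral_congr_fun measurableSet_Ioc hprod).symm
      _ = ∫⁻ r in Set.Ioc (0:ℝ) r₀,
            (ρ - δ' / 2) * (ENNReal.ofReal (r ^ d) * ENNReal.ofReal (r ^ (-p - 1))) :=
          (lintegral_const_mul' _ _ (ne_top_of_le_ne_top hρ tsub_le_self)).symm
      _ ≤ I₁ := by
          refine setLIntegral_mono' measurableSet_Ioc fun r hr => ?_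
          rw [← mul_assoc]
          exact mul_le_mul_left (hbounds r hr).1 _
  -- bound for I₂
  have hI₂up : I₂ ≤ C := by
    calc I₂ ≤ ∫⁻ _ in Set.Ioc r₀ 1, C := by
          refine setLIntegral_mono' measurableSet_Ioc fun r hr => ?_
          refine mul_le_mul' (measure_mono (Set.subset_univ _)) (ENNReal.ofReal_le_ofReal ?_)
          calc r ^ (-p - 1) ≤ r₀ ^ (-p - 1) :=
                Real.rpow_le_rpow_of_nonpos hr₀0 hr.1.le (by linarith)
            _ ≤ r₀ ^ (-d - 1) :=
                Real.rpow_le_rpow_of_exponent_ge hr₀0 hr₀1 (by linarith)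
      _ = C * volume (Set.Ioc r₀ 1) := setLIntegral_const _ _
      _ ≤ C * 1 := by
          refine mul_le_mul_right ?_ C
          rw [Real.volume_Ioc]
          exact ENNReal.ofReal_le_one.2 (by linarith)
      _ = C := mul_one C
  constructor
  · -- lower bound
    calc ρ - δ' ≤ (ρ - δ' / 2) * ENNReal.ofReal (r₀ ^ (d - p)) := h3
      _ = ENNReal.ofReal (d - p) * ((ρ - δ' / 2) * ENNReal.ofReal (r₀ ^ (d - p) / (d - p))) := by
          rw [mul_left_comm, hEr]
      _ ≤ ENNReal.ofReal (d - p) * I₁ := mul_le_mul_right hI₁lo _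
      _ ≤ ENNReal.ofReal (d - p) * (I₁ + I₂) := mul_le_mul_right le_self_add _
      _ = _ := by rw [hsplit]
  · -- upper bound
    calc ENNReal.ofReal (d - p) * ∫⁻ r in Set.Ioc (0:ℝ) 1, g r * ENNReal.ofReal (r ^ (-p - 1))
        = ENNReal.ofReal (d - p) * I₁ + ENNReal.ofReal (d - p) * I₂ := by
          rw [hsplit, mul_add]
      _ ≤ (ρ + δ' / 2) * ENNReal.ofReal (r₀ ^ (d - p)) + δ' / 2 := by
          refine add_le_add ?_ ?_
          · calc ENNReal.ofReal (d - p) * I₁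
                ≤ ENNReal.ofReal (d - p) *
                    ((ρ + δ' / 2) * ENNReal.ofReal (r₀ ^ (d - p) / (d - p))) :=
                  mul_le_mul_right hI₁up _
              _ = (ρ + δ' / 2) * ENNReal.ofReal (r₀ ^ (d - p)) := by
                  rw [mul_left_comm, hEr]
          · exact le_of_lt (lt_of_le_of_lt (mul_le_mul_right hI₂up _) h2)
      _ ≤ (ρ + δ' / 2) + δ' / 2 := by
          refine add_le_add_left ?_ _
          calc (ρ + δ' / 2) * ENNReal.ofReal (r₀ ^ (d - p))
              ≤ (ρ + δ' / 2) * 1 := mul_le_mul_right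
                (ENNReal.ofReal_le_one.2 (Real.rpow_le_one hr₀0.le hr₀1 hε.le)) _
            _ = ρ + δ' / 2 := mul_one _
      _ = ρ + δ' := by rw [add_assoc, ENNReal.add_halves]
end
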